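/- arXiv:1805.11936 — 11 statements merged into one kernel-verified Lean document; each statement's English description precedes it below -/
import Mathlib

section
/- Let (X, ≤) be a totally ordered set and let ⋎ : X² → X be a semilattice operation (associative, symmetric, idempotent) with associated partial order ⪯ defined by x ⪯ y iff x ⋎ y = y. Then ⋎ is ≤-preserving (monotone in each argument) if and only if ⪯ is nondecreasing for ≤, i.e., (1) for all a ≤ b ≤ c we have b ⪯ a ⋎ c, and (2) for all a < b < c we have a ≠ b ⋎ c and c ≠ a ⋎ b. -/
/-- A semilattice operation on a chain is order-preserving iff its associated
order (x ⪯ y iff F x y = y) is nondecreasing for the chain order: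
(1) CI-property and (2) internality. -/
theorem stmt_0 {X : Type*} [LinearOrder X] (F : X → X → X)
    (hassoc : ∀ x y z, F x (F y z) = F (F x y) z)
    (hcomm : ∀ x y, F x y = F y x)
    (hidem : ∀ x, F x x = x) :
    (∀ x y z t : X, x ≤ z → y ≤ t → F x y ≤ F z t) ↔
      ((∀ a b c : X, a ≤ b → b ≤ c → F b (F a c) = F a c) ∧
       (∀ a b c : X, a < b → b < c → F b c ≠ a ∧ F a b ≠ c)) := by
  have hjoin3 : ∀ u v, F (F u v) v = F u v := fun u v => by rw [← hassoc, hidem]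
  have hanti : ∀ u v : X, F u v = v → F v u = u → u = v := fun u v h1 h2 => by
    rw [← h2, hcomm, h1]
  constructor
  · intro hmono
    refine ⟨fun a b c hab hbc => ?_, fun a b c hab hbc => ⟨fun h => ?_, fun h => ?_⟩⟩
    · have h1 : F b (F a c) ≤ F c (F a c) := hmono _ _ _ _ hbc le_rfl
      have h2 : F a (F a c) ≤ F b (F a c) := hmono _ _ _ _ hab le_rfl
      rw [hassoc, hidem] at h2
      have hc : F c (F a c) = F a c := by rw [hcomm a c, hassoc, hidem]
      rw [hc] at h1
      exact le_antisymm h1 h2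
    · have hle := hmono b b b c le_rfl hbc.le
      rw [hidem, h] at hle
      exact absurd hle (not_le.mpr hab)
    · have hle := hmono a b b b hab.le le_rfl
      rw [hidem, h] at hle
      exact absurd hle (not_le.mpr hbc)
  · rintro ⟨hCI, hint⟩
    have hbd : ∀ u v : X, u ≤ v → u ≤ F u v ∧ F u v ≤ v := by
      intro u v huv
      rcases eq_or_lt_of_le huv with rfl | hlt
      · rw [hidem]; exact ⟨le_rfl, le_rfl⟩
      constructor
      · by_contra h
        exact (hint _ _ _ (not_le.mp h) hlt).1 rfl
      · by_contra h
        exact (hint _ _ _ hlt (not_le.mp h)).2 rfl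
    have hmono1 : ∀ x y z : X, x ≤ z → F x y ≤ F z y := by
      intro x y z hxz
      rcases le_total y x with hyx | hxy
      · -- y ≤ x ≤ z
        by_cases hx : x ≤ F z y
        · calc F x y = F y x := hcomm x y
            _ ≤ x := (hbd y x hyx).2
            _ ≤ F z y := hx
        · push_neg at hx
          rw [hcomm z y] at hx ⊢
          have hxj' : F x (F y z) = F y z := hCI y x z hyx hxz
          have hyj' : F y (F y z) = F y z := by rw [hassoc, hidem]
          have h1 : F (F x y) (F y z) = F y z := by rw [← hassoc, hyj', hxj']
          by_contra hc
          push_neg at hc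
          have hy_le : y ≤ F y z := (hbd y z (hyx.trans hxz)).1
          have hFyj : F y (F x y) = F x y := by rw [hcomm y (F x y), hjoin3]
          have h2 : F (F y z) (F x y) = F x y := by
            have h3 := hCI y (F y z) (F x y) hy_le hc.le
            rwa [hFyj] at h3
          exact hc.ne' (hanti _ _ h1 h2)
      · rcases le_total y z with hyz | hzy
        · calc F x y ≤ y := (hbd x y hxy).2
            _ ≤ F z y := by rw [hcomm]; exact (hbd y z hyz).1
        · -- x ≤ z ≤ y
          by_cases hj : F x y ≤ z
          · exact hj.trans (hbd z y hzy).1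
          push_neg at hj
          have hzj : F z (F x y) = F x y := hCI x z y hxz hzy
          have hyj : F y (F x y) = F x y := by rw [hcomm y (F x y), hjoin3]
          have h1 : F (F z y) (F x y) = F x y := by rw [← hassoc, hyj, hzj]
          by_contra hc
          push_neg at hc
          have hj_le : F x y ≤ y := (hbd x y hxy).2
          have h2 : F (F x y) (F z y) = F z y := by
            have h3 := hCI (F z y) (F x y) y hc.le hj_le
            rwa [hjoin3 z y] at h3
          exact hc.ne' (hanti _ _ h2 h1)
    intro x y z t hxz hyt
    calc F x y ≤ F z y := hmono1 x y z hxz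
      _ = F y z := hcomm z y
      _ ≤ F t z := hmono1 y z t hyt
      _ = F z t := hcomm t z
end

section
/- Let (X, ≤) be a totally ordered set and ⪯ a semilattice order on X (a partial order where every pair has a supremum ⋎). The following are equivalent: (i) ⪯ has the CI-property for ≤ (for all a ≤ b ≤ c, b ⪯ a ⋎ c); (ii) every ideal of (X,⪯) is a convex subset of (X,≤); (iii) every principal ideal of (X,⪯) is a convex subset of (X,≤). -/
/-- For a semilattice order ⪯ (given by `p`, with join `j`) on a chain:
the CI-property ↔ every ideal is convex ↔ every principal ideal is convex. -/
theorem stmt_2 {X : Type*} [LinearOrder X] (p : X → X → Prop) (j : X → X → X)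
    (hrefl : ∀ x, p x x)
    (hantisymm : ∀ x y, p x y → p y x → x = y)
    (htrans : ∀ x y z, p x y → p y z → p x z)
    (hjoin : ∀ x y, p x (j x y) ∧ p y (j x y) ∧
      ∀ z, p x z → p y z → p (j x y) z) :
    ((∀ a b c : X, a ≤ b → b ≤ c → p b (j a c)) ↔
      (∀ I : Set X, I.Nonempty → (∀ x y, p x y → y ∈ I → x ∈ I) →
        (∀ x y, x ∈ I → y ∈ I → j x y ∈ I) →
        ∀ a b x, a ∈ I → b ∈ I → a ≤ x → x ≤ b → x ∈ I)) ∧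
    ((∀ I : Set X, I.Nonempty → (∀ x y, p x y → y ∈ I → x ∈ I) →
        (∀ x y, x ∈ I → y ∈ I → j x y ∈ I) →
        ∀ a b x, a ∈ I → b ∈ I → a ≤ x → x ≤ b → x ∈ I) ↔
      (∀ t a b x : X, p a t → p b t → a ≤ x → x ≤ b → p x t)) := by
  have h1 : (∀ a b c : X, a ≤ b → b ≤ c → p b (j a c)) →
      (∀ I : Set X, I.Nonempty → (∀ x y, p x y → y ∈ I → x ∈ I) →
        (∀ x y, x ∈ I → y ∈ I → j x y ∈ I) →
        ∀ a b x, a ∈ I → b ∈ I → a ≤ x → x ≤ b → x ∈ I) := by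
    intro hCI I _ hlow hjcl a b x ha hb hax hxb
    exact hlow x (j a b) (hCI a x b hax hxb) (hjcl a b ha hb)
  have h2 : (∀ I : Set X, I.Nonempty → (∀ x y, p x y → y ∈ I → x ∈ I) →
        (∀ x y, x ∈ I → y ∈ I → j x y ∈ I) →
        ∀ a b x, a ∈ I → b ∈ I → a ≤ x → x ≤ b → x ∈ I) →
      (∀ t a b x : X, p a t → p b t → a ≤ x → x ≤ b → p x t) := by
    intro hID t a b x hat hbt hax hxb
    refine hID {y | p y t} ⟨t, hrefl t⟩ (fun u v huv hv => htrans u v t huv hv)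
      (fun u v hu hv => (hjoin u v).2.2 t hu hv) a b x hat hbt hax hxb
  have h3 : (∀ t a b x : X, p a t → p b t → a ≤ x → x ≤ b → p x t) →
      (∀ a b c : X, a ≤ b → b ≤ c → p b (j a c)) := by
    intro hPR a b c hab hbc
    exact hPR (j a c) a c b (hjoin a c).1 (hjoin a c).2.1 hab hbc
  exact ⟨⟨h1, fun h => h3 (h2 h)⟩, ⟨h2, fun h => h1 (h3 h)⟩⟩
end

section
/- Let (X, ≤) be a chain and ⪯ a join-semilattice order on X with join ⋎. The following are equivalent: (i) ⪯ is internal for ≤ (for all a < b < c, a ≠ b ⋎ c and c ≠ a ⋎ b); (ii) for all x ≤ y in X, x ≤ x ⋎ y ≤ y; (iii) there are no a < b < c in X with a ⋎ b = b ⋎ c ∈ {a, c}. -/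
/-- For a join-semilattice order on a chain: internality ↔ the join operation is
internal ↔ there are no a < b < c with a ⋎ b = b ⋎ c ∈ {a, c}. -/
theorem stmt_3 {X : Type*} [LinearOrder X] (p : X → X → Prop) (j : X → X → X)
    (hrefl : ∀ x, p x x)
    (hantisymm : ∀ x y, p x y → p y x → x = y)
    (htrans : ∀ x y z, p x y → p y z → p x z)
    (hjoin : ∀ x y, p x (j x y) ∧ p y (j x y) ∧
      ∀ z, p x z → p y z → p (j x y) z) :
    ((∀ a b c : X, a < b → b < c → j b c ≠ a ∧ j a b ≠ c) ↔
      (∀ x y : X, x ≤ y → x ≤ j x y ∧ j x y ≤ y)) ∧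
    ((∀ x y : X, x ≤ y → x ≤ j x y ∧ j x y ≤ y) ↔
      ¬ ∃ a b c : X, a < b ∧ b < c ∧ j a b = j b c ∧ (j a b = a ∨ j a b = c)) := by
  have hjself : ∀ x, j x x = x := fun x =>
    hantisymm _ _ ((hjoin x x).2.2 x (hrefl x) (hrefl x)) (hjoin x x).1
  have h21 : (∀ x y : X, x ≤ y → x ≤ j x y ∧ j x y ≤ y) →
      (∀ a b c : X, a < b → b < c → j b c ≠ a ∧ j a b ≠ c) := by
    intro h a b c hab hbc
    constructor
    · intro he
      have := (h b c hbc.le).1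
      rw [he] at this
      exact absurd this (not_le.mpr hab)
    · intro he
      have := (h a b hab.le).2
      rw [he] at this
      exact absurd this (not_le.mpr hbc)
  have h12 : (∀ a b c : X, a < b → b < c → j b c ≠ a ∧ j a b ≠ c) →
      (∀ x y : X, x ≤ y → x ≤ j x y ∧ j x y ≤ y) := by
    intro h x y hxy
    rcases eq_or_lt_of_le hxy with rfl | hlt
    · simp [hjself]
    constructor
    · by_contra hc
      push_neg at hc
      exact (h (j x y) x y hc hlt).1 rfl
    · by_contra hc
      push_neg at hc
      exact (h x y (j x y) hlt hc).2 rfl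
  have h23 : (∀ x y : X, x ≤ y → x ≤ j x y ∧ j x y ≤ y) →
      ¬ ∃ a b c : X, a < b ∧ b < c ∧ j a b = j b c ∧ (j a b = a ∨ j a b = c) := by
    rintro h ⟨a, b, c, hab, hbc, heq, hor⟩
    rcases hor with h1 | h1
    · have := (h b c hbc.le).1
      rw [← heq, h1] at this
      exact absurd this (not_le.mpr hab)
    · have := (h a b hab.le).2
      rw [h1] at this
      exact absurd this (not_le.mpr hbc)
  have h32 : (¬ ∃ a b c : X, a < b ∧ b < c ∧ j a b = j b c ∧ (j a b = a ∨ j a b = c)) →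
      (∀ x y : X, x ≤ y → x ≤ j x y ∧ j x y ≤ y) := by
    intro h x y hxy
    rcases eq_or_lt_of_le hxy with rfl | hlt
    · simp [hjself]
    set m := j x y with hm
    have hpxm : p x m := (hjoin x y).1
    have hpym : p y m := (hjoin x y).2.1
    constructor
    · by_contra hc
      push_neg at hc
      apply h
      have h1 : j m x = m := hantisymm _ _ ((hjoin m x).2.2 m (hrefl m) hpxm) (hjoin m x).1
      exact ⟨m, x, y, hc, hlt, by rw [h1], Or.inl (by rw [h1])⟩
    · by_contra hc
      push_neg at hc
      apply h
      have h1 : j y m = m := hantisymm _ _ ((hjoin y m).2.2 m hpym (hrefl m)) (hjoin y m).2.1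
      exact ⟨x, y, m, hlt, hc, h1.symm, Or.inr hm.symm⟩
  exact ⟨⟨h12, h21⟩, h23, h32⟩
end

section
/- Let (X, ≤) be a chain and ⪯ a join-semilattice order on X that is internal for ≤. Then there do not exist three pairwise ⪯-incomparable elements a, b, c of X such that a ⋎ b = a ⋎ c = b ⋎ c. -/
/-- If a join-semilattice order on a chain is internal, then there are no three
pairwise incomparable elements with a common pairwise join. -/
theorem stmt_4 {X : Type*} [LinearOrder X] (p : X → X → Prop) (j : X → X → X)
    (hrefl : ∀ x, p x x)
    (hantisymm : ∀ x y, p x y → p y x → x = y)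
    (htrans : ∀ x y z, p x y → p y z → p x z)
    (hjoin : ∀ x y, p x (j x y) ∧ p y (j x y) ∧
      ∀ z, p x z → p y z → p (j x y) z)
    (hint : ∀ a b c : X, a < b → b < c → j b c ≠ a ∧ j a b ≠ c) :
    ¬ ∃ a b c : X, (¬ p a b ∧ ¬ p b a) ∧ (¬ p a c ∧ ¬ p c a) ∧
      (¬ p b c ∧ ¬ p c b) ∧ j a b = j a c ∧ j a c = j b c := by
  rintro ⟨a, b, c, ⟨hab1, hab2⟩, ⟨hac1, hac2⟩, ⟨hbc1, hbc2⟩, h1, h2⟩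
  have jcomm : ∀ x y, j x y = j y x := fun x y =>
    hantisymm _ _ ((hjoin x y).2.2 _ (hjoin y x).2.1 (hjoin y x).1)
      ((hjoin y x).2.2 _ (hjoin x y).2.1 (hjoin x y).1)
  have key : ∀ x y z : X, x < y → y < z → ¬ p x y → j x y = j y z → False := by
    intro x y z hxy hyz hnp heq
    rcases lt_trichotomy (j x y) y with h | h | h
    · exact (hint (j x y) y z h hyz).1 heq.symm
    · exact hnp (h ▸ (hjoin x y).1)
    · exact (hint x y (j x y) hxy h).2 rfl
  have hab : a ≠ b := fun h => hab1 (h ▸ hrefl a)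
  have hac : a ≠ c := fun h => hac1 (h ▸ hrefl a)
  have hbc : b ≠ c := fun h => hbc1 (h ▸ hrefl b)
  rcases lt_trichotomy a b with h1' | h1' | h1'
  · rcases lt_trichotomy b c with h2' | h2' | h2'
    · exact key a b c h1' h2' hab1 (h1.trans h2)
    · exact hbc h2'
    · rcases lt_trichotomy a c with h3' | h3' | h3'
      · -- a < c < b
        exact key a c b h3' h2' hac1 (h2.trans (jcomm b c))
      · exact hac h3'
      · -- c < a < b
        exact key c a b h3' h1' hac2 ((jcomm c a).trans h1.symm)
  · exact hab h1'
  · rcases lt_trichotomy a c with h2' | h2' | h2'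
    · -- b < a < c
      exact key b a c h1' h2' hab2 ((jcomm b a).trans h1)
    · exact hac h2'
    · rcases lt_trichotomy b c with h3' | h3' | h3'
      · -- b < c < a
        exact key b c a h3' h2' hbc1 (h2.symm.trans (jcomm a c))
      · exact hbc h3'
      · -- c < b < a
        exact key c b a h3' h1' hbc2 ((jcomm c b).trans (h2.symm.trans (h1.symm.trans (jcomm a b))))
end

section
/- Let (X, ≤) be a totally ordered set and ⪯ a join-semilattice order on X. If ⪯ is nondecreasing for ≤ (i.e., has the CI-property and is internal for ≤), then every filter of (X,⪯) is totally ordered by ⪯. -/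
/-- If a join-semilattice order on a chain is nondecreasing (CI-property and
internal), then every filter is totally ordered. -/
theorem stmt_6 {X : Type*} [LinearOrder X] (p : X → X → Prop) (j : X → X → X)
    (hrefl : ∀ x, p x x)
    (hantisymm : ∀ x y, p x y → p y x → x = y)
    (htrans : ∀ x y z, p x y → p y z → p x z)
    (hjoin : ∀ x y, p x (j x y) ∧ p y (j x y) ∧
      ∀ z, p x z → p y z → p (j x y) z)
    (hCI : ∀ a b c : X, a ≤ b → b ≤ c → p b (j a c))
    (hint : ∀ a b c : X, a < b → b < c → j b c ≠ a ∧ j a b ≠ c) :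
    ∀ H : Set X, H.Nonempty → (∀ x y, p x y → x ∈ H → y ∈ H) →
      (∀ y z, y ∈ H → z ∈ H → ∃ t ∈ H, p t y ∧ p t z) →
      ∀ x y, x ∈ H → y ∈ H → p x y ∨ p y x := by
  have main : ∀ x y t : X, x ≤ y → p t x → p t y → p x y ∨ p y x := by
    intro x y t hxy htx hty
    rcases eq_or_lt_of_le hxy with rfl | hlt
    · exact Or.inl (hrefl x)
    set s := j x y with hs
    have hxs : p x s := (hjoin x y).1
    have hys : p y s := (hjoin x y).2.1
    have hsx : x ≤ s := by
      by_contra h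
      push_neg at h
      exact (hint s x y h hlt).1 rfl
    have hsy : s ≤ y := by
      by_contra h
      push_neg at h
      exact (hint x y s hlt h).2 rfl
    rcases le_total t s with hts | hst
    · left
      have h1 : p s (j t y) := hCI t s y hts hsy
      have h2 : p (j t y) y := (hjoin t y).2.2 y hty (hrefl y)
      have heq : s = y := hantisymm s y (htrans _ _ _ h1 h2) hys
      rw [← heq]
      exact hxs
    · right
      have h1 : p s (j x t) := hCI x s t hsx hst
      have h2 : p (j x t) x := (hjoin x t).2.2 x (hrefl x) htx
      have heq : s = x := hantisymm s x (htrans _ _ _ h1 h2) hxs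
      rw [← heq]
      exact hys
  intro H _ _ hdir x y hx hy
  obtain ⟨t, _, htx, hty⟩ := hdir x y hx hy
  rcases le_total x y with h | h
  · exact main x y t h htx hty
  · exact (main y x t h hty htx).symm
end

section
/- Let ⪯ be a join-semilattice order on the finite chain Xₙ = {1,...,n} (with natural order ≤ₙ) that is nondecreasing for ≤ₙ, and let r be the top element of (Xₙ,⪯). Then r has exactly one child in the Hasse diagram of (Xₙ,⪯) if and only if r ∈ {1, n}. -/
/-- `y` is covered by `x` in the partial order `p`. -/
def covers {X : Type*} (p : X → X → Prop) (y x : X) : Prop :=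
  p y x ∧ y ≠ x ∧ ∀ z, p y z → p z x → z = y ∨ z = x

/-- For a join-semilattice order on the n-element chain (n ≥ 2) that is
nondecreasing for the natural order, the top element r has exactly one child
in the Hasse diagram iff r ∈ {1, n}. -/
theorem stmt_8 (n : ℕ) (hn : 2 ≤ n)
    (p : Fin n → Fin n → Prop) (j : Fin n → Fin n → Fin n)
    (hrefl : ∀ x, p x x)
    (hantisymm : ∀ x y, p x y → p y x → x = y)
    (htrans : ∀ x y z, p x y → p y z → p x z)
    (hjoin : ∀ x y, p x (j x y) ∧ p y (j x y) ∧
      ∀ z, p x z → p y z → p (j x y) z)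
    (hCI : ∀ a b c : Fin n, a ≤ b → b ≤ c → p b (j a c))
    (hint : ∀ a b c : Fin n, a < b → b < c → j b c ≠ a ∧ j a b ≠ c)
    (r : Fin n) (htop : ∀ x, p x r) :
    (∃! x : Fin n, covers p x r) ↔ (r.val = 0 ∨ r.val = n - 1) := by
  -- every element ≠ r lies below some child of r
  have key : ∀ a : Fin n, a ≠ r → ∃ x, covers p x r ∧ p a x := by
    intro a ha
    have hwf : WellFounded (fun x y : Fin n => p y x ∧ y ≠ x) := by
      haveI : IsTrans (Fin n) (fun x y : Fin n => p y x ∧ y ≠ x) := by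
        constructor
        intro x y z hxy hyz
        refine ⟨htrans _ _ _ hyz.1 hxy.1, ?_⟩
        intro hzx
        subst hzx
        exact hyz.2 (hantisymm _ _ hyz.1 hxy.1)
      haveI : IsIrrefl (Fin n) (fun x y : Fin n => p y x ∧ y ≠ x) :=
        ⟨fun x hx => hx.2 rfl⟩
      exact Finite.wellFounded_of_trans_of_irrefl _
    obtain ⟨m, hm, hmax⟩ := hwf.has_min {z | p a z ∧ z ≠ r} ⟨a, hrefl a, ha⟩
    refine ⟨m, ⟨htop m, hm.2, ?_⟩, hm.1⟩
    intro z hmz hzr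
    by_cases hz : z = r
    · exact Or.inr hz
    · left
      by_contra hne
      exact hmax z ⟨htrans _ _ _ hm.1 hmz, hz⟩ ⟨hmz, fun h => hne h.symm⟩
  -- for two children x < y, the join is r
  have juniq : ∀ x y : Fin n, covers p x r → covers p y r → x < y → j x y = r := by
    intro x y hx hy hxy
    rcases hx.2.2 _ (hjoin x y).1 (htop _) with h | h
    · exfalso
      have hyx : p y x := by have := (hjoin x y).2.1; rwa [h] at this
      rcases hy.2.2 x hyx (htop x) with h' | h'
      · exact (ne_of_lt hxy) h'
      · exact hx.2.1 h'
    · exact h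
  constructor
  · rintro ⟨x, hx, hxu⟩
    by_contra hcon
    push_neg at hcon
    obtain ⟨h0, h1⟩ := hcon
    have hrn : r.val < n := r.isLt
    have hr2 : r.val + 1 < n := by omega
    set a : Fin n := ⟨r.val - 1, by omega⟩ with ha
    set b : Fin n := ⟨r.val + 1, hr2⟩ with hb
    have haR : a ≠ r := by
      intro h; have := congrArg Fin.val h; simp [ha] at this; omega
    have hbR : b ≠ r := by
      intro h; have := congrArg Fin.val h; simp [hb] at this
    obtain ⟨xa, hxa, hpa⟩ := key a haR
    obtain ⟨xb, hxb, hpb⟩ := key b hbR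
    have e1 : xa = x := hxu _ hxa
    have e2 : xb = x := hxu _ hxb
    have hCIr : p r (j a b) := by
      apply hCI a r b
      · rw [Fin.le_def]; simp [ha]
      · rw [Fin.le_def]; simp [hb]
    have hjx : p (j a b) x := (hjoin a b).2.2 x (e1 ▸ hpa) (e2 ▸ hpb)
    have hrx : p r x := htrans _ _ _ hCIr hjx
    exact hx.2.1 (hantisymm _ _ hx.1 hrx)
  · intro hr
    have uniq : ∀ x y : Fin n, covers p x r → covers p y r → x < y → False := by
      intro x y hx hy hxy
      have hj := juniq x y hx hy hxy
      have hxv : x.val ≠ r.val := fun hh => hx.2.1 (Fin.ext hh)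
      have hyv : y.val ≠ r.val := fun hh => hy.2.1 (Fin.ext hh)
      rcases hr with h | h
      · have hrx : r < x := by rw [Fin.lt_def]; omega
        exact (hint r x y hrx hxy).1 hj
      · have hyr : y < r := by rw [Fin.lt_def]; have := y.isLt; omega
        exact (hint x y r hxy hyr).2 hj
    obtain ⟨a, ha⟩ : ∃ a : Fin n, a ≠ r := by
      rcases hr with h | h
      · refine ⟨⟨1, by omega⟩, ?_⟩
        intro hh; have := congrArg Fin.val hh; simp at this; omega
      · refine ⟨⟨0, by omega⟩, ?_⟩
        intro hh; have := congrArg Fin.val hh; simp at this; omega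
    obtain ⟨x, hx, -⟩ := key a ha
    refine ⟨x, hx, ?_⟩
    intro y hy
    rcases lt_trichotomy y x with hlt | heq | hlt
    · exact absurd (uniq y x hy hx hlt) id
    · exact heq
    · exact absurd (uniq x y hx hy hlt) id
end

section
/- Let ⪯ be a join-semilattice order on Xₙ = {1,...,n} with top element r, such that ⪯ is nondecreasing for the natural order ≤ₙ. If r has two children x₁ and x₂ in the Hasse diagram (with 1 ⪯ x₁ and n ⪯ x₂), then 1 and n are ⪯-incomparable, the principal ideal (x₁] equals {1, 2, ..., r−1}, and (x₂] equals {r+1, ..., n}. -/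
/-- For a join-semilattice order on the n-element chain, nondecreasing for the
natural order, with top r having two children x₁ (above 1) and x₂ (above n):
1 and n are incomparable, (x₁] = {1,...,r-1} and (x₂] = {r+1,...,n}. -/
theorem stmt_9 (n : ℕ) (hn : 2 ≤ n)
    (p : Fin n → Fin n → Prop) (j : Fin n → Fin n → Fin n)
    (hrefl : ∀ x, p x x)
    (hantisymm : ∀ x y, p x y → p y x → x = y)
    (htrans : ∀ x y z, p x y → p y z → p x z)
    (hjoin : ∀ x y, p x (j x y) ∧ p y (j x y) ∧
      ∀ z, p x z → p y z → p (j x y) z)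
    (hCI : ∀ a b c : Fin n, a ≤ b → b ≤ c → p b (j a c))
    (hint : ∀ a b c : Fin n, a < b → b < c → j b c ≠ a ∧ j a b ≠ c)
    (r : Fin n) (htop : ∀ x, p x r)
    (x₁ x₂ : Fin n) (hx₁ : covers p x₁ r) (hx₂ : covers p x₂ r) (hne : x₁ ≠ x₂)
    (h1 : p (⟨0, by omega⟩ : Fin n) x₁)
    (h2 : p (⟨n - 1, by omega⟩ : Fin n) x₂) :
    (¬ p (⟨0, by omega⟩ : Fin n) (⟨n - 1, by omega⟩ : Fin n) ∧
     ¬ p (⟨n - 1, by omega⟩ : Fin n) (⟨0, by omega⟩ : Fin n)) ∧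
    (∀ y : Fin n, p y x₁ ↔ y < r) ∧
    (∀ y : Fin n, p y x₂ ↔ r < y) := by
  set z0 : Fin n := ⟨0, by omega⟩ with hz0
  set zl : Fin n := ⟨n - 1, by omega⟩ with hzl
  have hzle : ∀ x : Fin n, z0 ≤ x := by
    intro x; simp [hz0, Fin.le_def]
  have hlle : ∀ x : Fin n, x ≤ zl := by
    intro x; simp [hzl, Fin.le_def]; omega
  -- x₁ < r
  have hlt1 : x₁ < r := by
    rcases lt_or_ge x₁ r with h | h
    · exact h
    · exfalso
      have hj : p r (j z0 x₁) := hCI z0 r x₁ (hzle r) h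
      have hjx : p (j z0 x₁) x₁ := (hjoin z0 x₁).2.2 x₁ h1 (hrefl x₁)
      exact hx₁.2.1 (hantisymm x₁ r hx₁.1 (htrans r (j z0 x₁) x₁ hj hjx))
  -- r < x₂
  have hlt2 : r < x₂ := by
    rcases lt_or_ge r x₂ with h | h
    · exact h
    · exfalso
      have hj : p r (j x₂ zl) := hCI x₂ r zl h (hlle r)
      have hjx : p (j x₂ zl) x₂ := (hjoin x₂ zl).2.2 x₂ (hrefl x₂) h2
      exact hx₂.2.1 (hantisymm x₂ r hx₂.1 (htrans r (j x₂ zl) x₂ hj hjx))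
  -- forward for x₁
  have fwd1 : ∀ y, p y x₁ → y < r := by
    intro y hy
    rcases lt_or_ge y r with h | h
    · exact h
    · exfalso
      have hj : p r (j x₁ y) := hCI x₁ r y (le_of_lt hlt1) h
      have hjx : p (j x₁ y) x₁ := (hjoin x₁ y).2.2 x₁ (hrefl x₁) hy
      exact hx₁.2.1 (hantisymm x₁ r hx₁.1 (htrans r (j x₁ y) x₁ hj hjx))
  -- backward for x₁
  have bwd1 : ∀ y, y < r → p y x₁ := by
    intro y hy
    rcases le_or_gt y x₁ with h | h
    · have hj : p y (j z0 x₁) := hCI z0 y x₁ (hzle y) h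
      have hjx : p (j z0 x₁) x₁ := (hjoin z0 x₁).2.2 x₁ h1 (hrefl x₁)
      exact htrans y (j z0 x₁) x₁ hj hjx
    · have hcov := hx₁.2.2 (j x₁ y) (hjoin x₁ y).1 (htop _)
      rcases hcov with he | he
      · have := (hjoin x₁ y).2.1; rwa [he] at this
      · exact absurd he (hint x₁ y r h hy).2
  -- forward for x₂
  have fwd2 : ∀ y, p y x₂ → r < y := by
    intro y hy
    rcases lt_or_ge r y with h | h
    · exact h
    · exfalso
      have hj : p r (j y x₂) := hCI y r x₂ h (le_of_lt hlt2)
      have hjx : p (j y x₂) x₂ := (hjoin y x₂).2.2 x₂ hy (hrefl x₂)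
      exact hx₂.2.1 (hantisymm x₂ r hx₂.1 (htrans r (j y x₂) x₂ hj hjx))
  -- backward for x₂
  have bwd2 : ∀ y, r < y → p y x₂ := by
    intro y hy
    rcases le_or_gt x₂ y with h | h
    · have hj : p y (j x₂ zl) := hCI x₂ y zl h (hlle y)
      have hjx : p (j x₂ zl) x₂ := (hjoin x₂ zl).2.2 x₂ (hrefl x₂) h2
      exact htrans y (j x₂ zl) x₂ hj hjx
    · have hcov := hx₂.2.2 (j y x₂) (hjoin y x₂).2.1 (htop _)
      rcases hcov with he | he
      · have := (hjoin y x₂).1; rwa [he] at this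
      · exact absurd he (hint r y x₂ hy h).1
  refine ⟨⟨?_, ?_⟩, fun y => ⟨fwd1 y, bwd1 y⟩, fun y => ⟨fwd2 y, bwd2 y⟩⟩
  · intro hc
    have : r < z0 := fwd2 z0 (htrans z0 zl x₂ hc h2)
    exact absurd this (by simp [hz0, Fin.lt_def])
  · intro hc
    have h1' : zl < r := fwd1 zl (htrans zl z0 x₁ hc h1)
    have h2' : r < zl := lt_of_lt_of_le hlt2 (hlle x₂)
    exact absurd h1' (not_lt.2 (le_of_lt h2'))
end

section
/- The number of join-semilattice orders on the n-element chain Xₙ = {1,...,n} that are nondecreasing for the natural order ≤ₙ is the n-th Catalan number (2n)!/(n!(n+1)!). Equivalently, the number of associative, idempotent, symmetric, ≤ₙ-preserving binary operations on Xₙ is the n-th Catalan number. -/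
/-- `s` is the supremum of `x` and `y` for the partial order `p`. -/
def IsSupOf {X : Type*} (p : X → X → Prop) (x y s : X) : Prop :=
  p x s ∧ p y s ∧ ∀ z, p x z → p y z → p s z

/-- `p` is a join-semilattice order on `Fin n` that is nondecreasing for the
natural order: partial order, every pair has a supremum, CI-property, and
internality. -/
def IsNondecSemilatticeOrder (n : ℕ) (p : Fin n → Fin n → Prop) : Prop :=
  (∀ x, p x x) ∧ (∀ x y, p x y → p y x → x = y) ∧
  (∀ x y z, p x y → p y z → p x z) ∧
  (∀ x y, ∃ s, IsSupOf p x y s) ∧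
  (∀ a b c s : Fin n, a ≤ b → b ≤ c → IsSupOf p a c s → p b s) ∧
  (∀ a b c s : Fin n, a < b → b < c →
    (IsSupOf p b c s → s ≠ a) ∧ (IsSupOf p a b s → s ≠ c))

def GoodProp (n : ℕ) (F : Fin n → Fin n → Fin n) : Prop :=
  (∀ x y z, F x (F y z) = F (F x y) z) ∧
  (∀ x y, F x y = F y x) ∧ (∀ x, F x x = x) ∧
  (∀ x y z t : Fin n, x ≤ z → y ≤ t → F x y ≤ F z t)

abbrev Good (n : ℕ) := {F : Fin n → Fin n → Fin n // GoodProp n F}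

section OpLemmas

variable {n : ℕ} {F : Fin n → Fin n → Fin n} (hF : GoodProp n F)
include hF

lemma good_min_le {x y : Fin n} : min x.1 y.1 ≤ (F x y).1 := by
  obtain ⟨ha, hc, hi, hm⟩ := hF
  rcases le_total x y with h | h
  · have : F x x ≤ F x y := hm x x x y le_rfl h
    rw [hi] at this
    have := Fin.le_def.mp this
    have := Fin.le_def.mp h
    omega
  · have : F y y ≤ F x y := hm y y x y h le_rfl
    rw [hi] at this
    have := Fin.le_def.mp this
    have := Fin.le_def.mp h
    omega

lemma good_le_max {x y : Fin n} : (F x y).1 ≤ max x.1 y.1 := by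
  obtain ⟨ha, hc, hi, hm⟩ := hF
  rcases le_total x y with h | h
  · have : F x y ≤ F y y := hm x y y y h le_rfl
    rw [hi] at this
    have := Fin.le_def.mp this
    have := Fin.le_def.mp h
    omega
  · have : F x y ≤ F x x := hm x y x x le_rfl h
    rw [hi] at this
    have := Fin.le_def.mp this
    have := Fin.le_def.mp h
    omega

end OpLemmas

section TopLemmas

variable {n : ℕ} {F : Fin (n+1) → Fin (n+1) → Fin (n+1)} (hF : GoodProp (n+1) F)
include hF

lemma good_top (z : Fin (n+1)) : F z (F 0 (Fin.last n)) = F 0 (Fin.last n) := by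
  obtain ⟨ha, hc, hi, hm⟩ := hF
  have h1 : F 0 (Fin.last n) ≤ F z (F 0 (Fin.last n)) := by
    have e : F z (F 0 (Fin.last n)) = F (F z 0) (Fin.last n) := ha z 0 (Fin.last n)
    rw [e]
    exact hm 0 (Fin.last n) (F z 0) (Fin.last n) (Fin.zero_le _) le_rfl
  have h3 : F (Fin.last n) (F 0 (Fin.last n)) = F 0 (Fin.last n) := by
    rw [hc 0 (Fin.last n), ha, hi]
  have h2 : F z (F 0 (Fin.last n)) ≤ F 0 (Fin.last n) := by
    calc F z (F 0 (Fin.last n)) ≤ F (Fin.last n) (F 0 (Fin.last n)) :=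
          hm z (F 0 (Fin.last n)) (Fin.last n) (F 0 (Fin.last n)) (Fin.le_last z) le_rfl
      _ = F 0 (Fin.last n) := h3
  exact le_antisymm h2 h1

lemma good_between {x y : Fin (n+1)} (hx : x ≤ F 0 (Fin.last n)) (hy : F 0 (Fin.last n) ≤ y) :
    F x y = F 0 (Fin.last n) := by
  have h1 : F 0 (Fin.last n) ≤ F x y := by
    have e : F x (F 0 (Fin.last n)) = F 0 (Fin.last n) := good_top hF x
    calc F 0 (Fin.last n) = F x (F 0 (Fin.last n)) := e.symm
      _ ≤ F x y := hF.2.2.2 x (F 0 (Fin.last n)) x y le_rfl hy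
  have h2 : F x y ≤ F 0 (Fin.last n) := by
    have e : F y (F 0 (Fin.last n)) = F 0 (Fin.last n) := good_top hF y
    calc F x y = F y x := hF.2.1 x y
      _ ≤ F y (F 0 (Fin.last n)) := hF.2.2.2 y x y (F 0 (Fin.last n)) le_rfl hx
      _ = F 0 (Fin.last n) := e
  exact le_antisymm h2 h1

end TopLemmas

section Glue

variable {n : ℕ}

def embL (t : Fin (n+1)) (a : Fin t.1) : Fin (n+1) := ⟨a.1, lt_trans a.isLt t.isLt⟩

def embR (t : Fin (n+1)) (a : Fin (n - t.1)) : Fin (n+1) :=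
  ⟨t.1 + 1 + a.1, by have h1 := a.isLt; have h2 := t.isLt; omega⟩

@[simp] lemma embL_val (t : Fin (n+1)) (a : Fin t.1) : (embL t a).1 = a.1 := rfl
@[simp] lemma embR_val (t : Fin (n+1)) (a : Fin (n - t.1)) : (embR t a).1 = t.1 + 1 + a.1 := rfl

def glue (t : Fin (n+1)) (Fl : Fin t.1 → Fin t.1 → Fin t.1)
    (Fr : Fin (n - t.1) → Fin (n - t.1) → Fin (n - t.1)) :
    Fin (n+1) → Fin (n+1) → Fin (n+1) := fun x y =>
  if h : x.1 < t.1 ∧ y.1 < t.1 then embL t (Fl ⟨x.1, h.1⟩ ⟨y.1, h.2⟩)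
  else if h2 : t.1 < x.1 ∧ t.1 < y.1 then
    embR t (Fr ⟨x.1 - t.1 - 1, by have := x.isLt; omega⟩
      ⟨y.1 - t.1 - 1, by have := y.isLt; omega⟩)
  else t

variable {t : Fin (n+1)} {Fl : Fin t.1 → Fin t.1 → Fin t.1}
  {Fr : Fin (n - t.1) → Fin (n - t.1) → Fin (n - t.1)}

lemma glue_LL {x y : Fin (n+1)} (hx : x.1 < t.1) (hy : y.1 < t.1) :
    glue t Fl Fr x y = embL t (Fl ⟨x.1, hx⟩ ⟨y.1, hy⟩) := by
  unfold glue; rw [dif_pos ⟨hx, hy⟩]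

lemma glue_RR {x y : Fin (n+1)} (hx : t.1 < x.1) (hy : t.1 < y.1) :
    glue t Fl Fr x y = embR t (Fr ⟨x.1 - t.1 - 1, by have := x.isLt; omega⟩
      ⟨y.1 - t.1 - 1, by have := y.isLt; omega⟩) := by
  unfold glue; rw [dif_neg (by omega), dif_pos ⟨hx, hy⟩]

lemma glue_mid {x y : Fin (n+1)} (h1 : ¬ (x.1 < t.1 ∧ y.1 < t.1))
    (h2 : ¬ (t.1 < x.1 ∧ t.1 < y.1)) : glue t Fl Fr x y = t := by
  unfold glue; rw [dif_neg h1, dif_neg h2]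

lemma glue_embL (a b : Fin t.1) : glue t Fl Fr (embL t a) (embL t b) = embL t (Fl a b) := by
  rw [glue_LL a.isLt b.isLt]
  apply congrArg
  congr 1 <;> exact Fin.ext (by simp)

lemma glue_embR (a b : Fin (n - t.1)) :
    glue t Fl Fr (embR t a) (embR t b) = embR t (Fr a b) := by
  have hx : t.1 < (embR t a).1 := by simp only [embR_val]; omega
  have hy : t.1 < (embR t b).1 := by simp only [embR_val]; omega
  rw [glue_RR hx hy]
  apply congrArg
  have ea : (⟨(embR t a).1 - t.1 - 1, by have := a.isLt; simp only [embR_val]; omega⟩ : Fin (n - t.1)) = a :=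
    Fin.ext (by simp only [embR_val]; omega)
  have eb : (⟨(embR t b).1 - t.1 - 1, by have := b.isLt; simp only [embR_val]; omega⟩ : Fin (n - t.1)) = b :=
    Fin.ext (by simp only [embR_val]; omega)
  rw [ea, eb]

end Glue

section GlueGood

variable {n : ℕ} {t : Fin (n+1)} {Fl : Fin t.1 → Fin t.1 → Fin t.1}
  {Fr : Fin (n - t.1) → Fin (n - t.1) → Fin (n - t.1)}

lemma glue_val_lt {x y : Fin (n+1)} :
    (glue t Fl Fr x y).1 < t.1 ↔ x.1 < t.1 ∧ y.1 < t.1 := by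
  constructor
  · intro h
    by_contra hc
    by_cases h2 : t.1 < x.1 ∧ t.1 < y.1
    · rw [glue_RR h2.1 h2.2] at h
      simp only [embR_val] at h
      omega
    · rw [glue_mid hc h2] at h
      omega
  · intro ⟨hx, hy⟩
    rw [glue_LL hx hy]
    simp only [embL_val]
    exact (Fl _ _).isLt

lemma glue_val_gt {x y : Fin (n+1)} :
    t.1 < (glue t Fl Fr x y).1 ↔ t.1 < x.1 ∧ t.1 < y.1 := by
  constructor
  · intro h
    by_contra hc
    by_cases h1 : x.1 < t.1 ∧ y.1 < t.1
    · rw [glue_LL h1.1 h1.2] at h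
      simp only [embL_val] at h
      have := (Fl (⟨x.1, h1.1⟩ : Fin t.1) ⟨y.1, h1.2⟩).isLt
      omega
    · rw [glue_mid h1 hc] at h
      omega
  · intro ⟨hx, hy⟩
    rw [glue_RR hx hy]
    simp only [embR_val]
    omega

lemma glue_good (hFl : GoodProp t.1 Fl) (hFr : GoodProp (n - t.1) Fr) :
    GoodProp (n+1) (glue t Fl Fr) := by
  obtain ⟨la, lc, li, lm⟩ := hFl
  obtain ⟨ra, rc, ri, rm⟩ := hFr
  have key : ∀ x y z : Fin (n+1), ¬ (x.1 < t.1 ∧ y.1 < t.1 ∧ z.1 < t.1) →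
      ¬ (t.1 < x.1 ∧ t.1 < y.1 ∧ t.1 < z.1) → glue t Fl Fr x (glue t Fl Fr y z) = t := by
    intro x y z h1 h2
    apply glue_mid
    · rintro ⟨hx, hyz⟩
      have := glue_val_lt.mp hyz
      exact h1 ⟨hx, this.1, this.2⟩
    · rintro ⟨hx, hyz⟩
      have := glue_val_gt.mp hyz
      exact h2 ⟨hx, this.1, this.2⟩
  have hcomm : ∀ a b : Fin (n+1), glue t Fl Fr a b = glue t Fl Fr b a := by
    intro a b
    by_cases h1 : a.1 < t.1 ∧ b.1 < t.1
    · rw [glue_LL h1.1 h1.2, glue_LL h1.2 h1.1, lc]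
    · by_cases h2 : t.1 < a.1 ∧ t.1 < b.1
      · rw [glue_RR h2.1 h2.2, glue_RR h2.2 h2.1, rc]
      · have h1' : ¬ (b.1 < t.1 ∧ a.1 < t.1) := by omega
        have h2' : ¬ (t.1 < b.1 ∧ t.1 < a.1) := by omega
        rw [glue_mid h1 h2, glue_mid h1' h2']
  refine ⟨?_, ?_, ?_, ?_⟩
  · -- associativity
    intro x y z
    by_cases hL : x.1 < t.1 ∧ y.1 < t.1 ∧ z.1 < t.1
    · obtain ⟨hx, hy, hz⟩ := hL
      obtain ⟨a, rfl⟩ : ∃ a, x = embL t a := ⟨⟨x.1, hx⟩, Fin.ext rfl⟩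
      obtain ⟨b, rfl⟩ : ∃ b, y = embL t b := ⟨⟨y.1, hy⟩, Fin.ext rfl⟩
      obtain ⟨c, rfl⟩ : ∃ c, z = embL t c := ⟨⟨z.1, hz⟩, Fin.ext rfl⟩
      rw [glue_embL, glue_embL, glue_embL, glue_embL, la]
    · by_cases hR : t.1 < x.1 ∧ t.1 < y.1 ∧ t.1 < z.1
      · obtain ⟨hx, hy, hz⟩ := hR
        obtain ⟨a, rfl⟩ : ∃ a, x = embR t a :=
          ⟨⟨x.1 - t.1 - 1, by have := x.isLt; omega⟩, Fin.ext (by simp only [embR_val]; omega)⟩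
        obtain ⟨b, rfl⟩ : ∃ b, y = embR t b :=
          ⟨⟨y.1 - t.1 - 1, by have := y.isLt; omega⟩, Fin.ext (by simp only [embR_val]; omega)⟩
        obtain ⟨c, rfl⟩ : ∃ c, z = embR t c :=
          ⟨⟨z.1 - t.1 - 1, by have := z.isLt; omega⟩, Fin.ext (by simp only [embR_val]; omega)⟩
        rw [glue_embR, glue_embR, glue_embR, glue_embR, ra]
      · have e1 : glue t Fl Fr x (glue t Fl Fr y z) = t := key x y z hL hR
        have e2 : glue t Fl Fr (glue t Fl Fr x y) z = t := by
          rw [hcomm, hcomm x y]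
          exact key z y x (by omega) (by omega)
        rw [e1, e2]
  · -- commutativity
    exact hcomm
  · -- idempotence
    intro x
    rcases lt_trichotomy x.1 t.1 with h | h | h
    · obtain ⟨a, rfl⟩ : ∃ a, x = embL t a := ⟨⟨x.1, h⟩, Fin.ext rfl⟩
      rw [glue_embL, li]
    · exact (glue_mid (by omega) (by omega)).trans (Fin.ext h.symm)
    · obtain ⟨a, rfl⟩ : ∃ a, x = embR t a :=
        ⟨⟨x.1 - t.1 - 1, by have := x.isLt; omega⟩, Fin.ext (by simp only [embR_val]; omega)⟩
      rw [glue_embR, ri]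
  · -- monotonicity
    intro x y z w hxz hyw
    rw [Fin.le_def] at hxz hyw ⊢
    by_cases hzw : z.1 < t.1 ∧ w.1 < t.1
    · have hx : x.1 < t.1 := by omega
      have hy : y.1 < t.1 := by omega
      rw [glue_LL hx hy, glue_LL hzw.1 hzw.2]
      simp only [embL_val]
      have := lm ⟨x.1, hx⟩ ⟨y.1, hy⟩ ⟨z.1, hzw.1⟩ ⟨w.1, hzw.2⟩
        (Fin.le_def.mpr hxz) (Fin.le_def.mpr hyw)
      exact Fin.le_def.mp this
    · by_cases hzw2 : t.1 < z.1 ∧ t.1 < w.1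
      · rw [glue_RR hzw2.1 hzw2.2]
        simp only [embR_val]
        by_cases hxy : t.1 < x.1 ∧ t.1 < y.1
        · rw [glue_RR hxy.1 hxy.2]
          simp only [embR_val]
          have := rm ⟨x.1 - t.1 - 1, by have := x.isLt; omega⟩
            ⟨y.1 - t.1 - 1, by have := y.isLt; omega⟩
            ⟨z.1 - t.1 - 1, by have := z.isLt; omega⟩
            ⟨w.1 - t.1 - 1, by have := w.isLt; omega⟩
            (Fin.le_def.mpr (by simp only; omega)) (Fin.le_def.mpr (by simp only; omega))
          have := Fin.le_def.mp this
          omega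
        · by_cases hxy2 : x.1 < t.1 ∧ y.1 < t.1
          · have hlt : (glue t Fl Fr x y).1 < t.1 := glue_val_lt.mpr hxy2
            omega
          · rw [glue_mid hxy2 hxy]
            omega
      · rw [glue_mid hzw hzw2]
        by_cases hxy : x.1 < t.1 ∧ y.1 < t.1
        · have hlt : (glue t Fl Fr x y).1 < t.1 := glue_val_lt.mpr hxy
          omega
        · rw [glue_mid hxy (by omega)]

end GlueGood

section Restrict

variable {n : ℕ} {F : Fin (n+1) → Fin (n+1) → Fin (n+1)}

def topOf (F : Fin (n+1) → Fin (n+1) → Fin (n+1)) : Fin (n+1) := F 0 (Fin.last n)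

def restL (F : Fin (n+1) → Fin (n+1) → Fin (n+1)) (hF : GoodProp (n+1) F)
    (i j : Fin (topOf F).1) : Fin (topOf F).1 :=
  ⟨(F (embL (topOf F) i) (embL (topOf F) j)).1, by
    have h := good_le_max hF (x := embL (topOf F) i) (y := embL (topOf F) j)
    have hi := i.isLt; have hj := j.isLt
    simp only [embL_val] at h
    omega⟩

def restR (F : Fin (n+1) → Fin (n+1) → Fin (n+1)) (hF : GoodProp (n+1) F)
    (i j : Fin (n - (topOf F).1)) : Fin (n - (topOf F).1) :=
  ⟨(F (embR (topOf F) i) (embR (topOf F) j)).1 - (topOf F).1 - 1, by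
    have h1 := good_le_max hF (x := embR (topOf F) i) (y := embR (topOf F) j)
    have h2 := good_min_le hF (x := embR (topOf F) i) (y := embR (topOf F) j)
    have hi := i.isLt; have hj := j.isLt
    simp only [embR_val] at h1 h2
    omega⟩

lemma embL_restL (hF : GoodProp (n+1) F) (i j : Fin (topOf F).1) :
    embL (topOf F) (restL F hF i j) = F (embL (topOf F) i) (embL (topOf F) j) :=
  Fin.ext rfl

lemma embR_restR (hF : GoodProp (n+1) F) (i j : Fin (n - (topOf F).1)) :
    embR (topOf F) (restR F hF i j) = F (embR (topOf F) i) (embR (topOf F) j) := by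
  apply Fin.ext
  have h2 := good_min_le hF (x := embR (topOf F) i) (y := embR (topOf F) j)
  simp only [embR_val] at h2 ⊢
  show (topOf F).1 + 1 + ((F (embR (topOf F) i) (embR (topOf F) j)).1 - (topOf F).1 - 1) = _
  omega

lemma restL_good (hF : GoodProp (n+1) F) : GoodProp (topOf F).1 (restL F hF) := by
  refine ⟨?_, ?_, ?_, ?_⟩
  · intro i j k
    apply Fin.ext
    show (F (embL (topOf F) i) (embL (topOf F) (restL F hF j k))).1
      = (F (embL (topOf F) (restL F hF i j)) (embL (topOf F) k)).1
    rw [embL_restL, embL_restL, hF.1]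
  · intro i j
    apply Fin.ext
    show (F (embL (topOf F) i) (embL (topOf F) j)).1 = (F (embL (topOf F) j) (embL (topOf F) i)).1
    rw [hF.2.1 (embL (topOf F) i) (embL (topOf F) j)]
  · intro i
    apply Fin.ext
    show (F (embL (topOf F) i) (embL (topOf F) i)).1 = i.1
    rw [hF.2.2.1]
    rfl
  · intro i j k l hik hjl
    rw [Fin.le_def]
    show (F (embL (topOf F) i) (embL (topOf F) j)).1 ≤ (F (embL (topOf F) k) (embL (topOf F) l)).1
    have := hF.2.2.2 (embL (topOf F) i) (embL (topOf F) j) (embL (topOf F) k) (embL (topOf F) l)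
      (Fin.le_def.mpr (by simp only [embL_val]; exact Fin.le_def.mp hik))
      (Fin.le_def.mpr (by simp only [embL_val]; exact Fin.le_def.mp hjl))
    exact Fin.le_def.mp this

lemma restR_good (hF : GoodProp (n+1) F) : GoodProp (n - (topOf F).1) (restR F hF) := by
  refine ⟨?_, ?_, ?_, ?_⟩
  · intro i j k
    apply Fin.ext
    show (F (embR (topOf F) i) (embR (topOf F) (restR F hF j k))).1 - (topOf F).1 - 1
      = (F (embR (topOf F) (restR F hF i j)) (embR (topOf F) k)).1 - (topOf F).1 - 1
    rw [embR_restR, embR_restR, hF.1]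
  · intro i j
    apply Fin.ext
    show (F (embR (topOf F) i) (embR (topOf F) j)).1 - (topOf F).1 - 1
      = (F (embR (topOf F) j) (embR (topOf F) i)).1 - (topOf F).1 - 1
    rw [hF.2.1 (embR (topOf F) i) (embR (topOf F) j)]
  · intro i
    apply Fin.ext
    show (F (embR (topOf F) i) (embR (topOf F) i)).1 - (topOf F).1 - 1 = i.1
    rw [hF.2.2.1]
    simp only [embR_val]
    omega
  · intro i j k l hik hjl
    rw [Fin.le_def]
    show (F (embR (topOf F) i) (embR (topOf F) j)).1 - (topOf F).1 - 1
      ≤ (F (embR (topOf F) k) (embR (topOf F) l)).1 - (topOf F).1 - 1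
    have := hF.2.2.2 (embR (topOf F) i) (embR (topOf F) j) (embR (topOf F) k) (embR (topOf F) l)
      (Fin.le_def.mpr (by simp only [embR_val]; have := Fin.le_def.mp hik; omega))
      (Fin.le_def.mpr (by simp only [embR_val]; have := Fin.le_def.mp hjl; omega))
    have := Fin.le_def.mp this
    omega

lemma glue_rest (hF : GoodProp (n+1) F) : glue (topOf F) (restL F hF) (restR F hF) = F := by
  funext x y
  by_cases h1 : x.1 < (topOf F).1 ∧ y.1 < (topOf F).1
  · obtain ⟨a, rfl⟩ : ∃ a, x = embL (topOf F) a := ⟨⟨x.1, h1.1⟩, Fin.ext rfl⟩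
    obtain ⟨b, rfl⟩ : ∃ b, y = embL (topOf F) b := ⟨⟨y.1, h1.2⟩, Fin.ext rfl⟩
    rw [glue_embL, embL_restL]
  · by_cases h2 : (topOf F).1 < x.1 ∧ (topOf F).1 < y.1
    · obtain ⟨a, rfl⟩ : ∃ a, x = embR (topOf F) a :=
        ⟨⟨x.1 - (topOf F).1 - 1, by have := x.isLt; omega⟩,
          Fin.ext (by simp only [embR_val]; omega)⟩
      obtain ⟨b, rfl⟩ : ∃ b, y = embR (topOf F) b :=
        ⟨⟨y.1 - (topOf F).1 - 1, by have := y.isLt; omega⟩,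
          Fin.ext (by simp only [embR_val]; omega)⟩
      rw [glue_embR, embR_restR]
    · rw [glue_mid h1 h2]
      rcases (by omega : (x.1 ≤ (topOf F).1 ∧ (topOf F).1 ≤ y.1) ∨
          (y.1 ≤ (topOf F).1 ∧ (topOf F).1 ≤ x.1)) with ⟨ha, hb⟩ | ⟨ha, hb⟩
      · exact (good_between hF (Fin.le_def.mpr ha) (Fin.le_def.mpr hb)).symm
      · rw [hF.2.1 x y]
        exact (good_between hF (Fin.le_def.mpr ha) (Fin.le_def.mpr hb)).symm

lemma topOf_glue {t : Fin (n+1)} {Fl : Fin t.1 → Fin t.1 → Fin t.1}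
    {Fr : Fin (n - t.1) → Fin (n - t.1) → Fin (n - t.1)} : topOf (glue t Fl Fr) = t := by
  have h1 : ¬ ((0 : Fin (n+1)).1 < t.1 ∧ (Fin.last n).1 < t.1) := by
    simp only [Fin.val_zero, Fin.val_last]
    have := t.isLt
    omega
  have h2 : ¬ (t.1 < (0 : Fin (n+1)).1 ∧ t.1 < (Fin.last n).1) := by
    simp only [Fin.val_zero]
    omega
  exact glue_mid h1 h2

end Restrict

section Counting

def glueMap (n : ℕ) : (Σ t : Fin (n+1), Good t.1 × Good (n - t.1)) → Good (n+1) :=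
  fun x => ⟨glue x.1 x.2.1.1 x.2.2.1, glue_good x.2.1.2 x.2.2.2⟩

lemma glueMap_bijective (n : ℕ) : Function.Bijective (glueMap n) := by
  constructor
  · rintro ⟨t, ⟨Fl, hFl⟩, ⟨Fr, hFr⟩⟩ ⟨s, ⟨Gl, hGl⟩, ⟨Gr, hGr⟩⟩ h
    have hfun : glue t Fl Fr = glue s Gl Gr := congrArg Subtype.val h
    have hts : t = s := by
      rw [← topOf_glue (t := t) (Fl := Fl) (Fr := Fr),
        ← topOf_glue (t := s) (Fl := Gl) (Fr := Gr), hfun]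
    subst hts
    have hL : Fl = Gl := by
      funext i j
      have h1 : glue t Fl Fr (embL t i) (embL t j) = glue t Gl Gr (embL t i) (embL t j) := by
        rw [hfun]
      rw [glue_embL, glue_embL] at h1
      have h2 := congrArg Fin.val h1
      exact Fin.ext h2
    have hR : Fr = Gr := by
      funext i j
      have h1 : glue t Fl Fr (embR t i) (embR t j) = glue t Gl Gr (embR t i) (embR t j) := by
        rw [hfun]
      rw [glue_embR, glue_embR] at h1
      have := congrArg Fin.val h1
      simp only [embR_val] at this
      exact Fin.ext (by omega)
    subst hL
    subst hR
    rfl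
  · rintro ⟨F, hF⟩
    exact ⟨⟨topOf F, ⟨restL F hF, restL_good hF⟩, ⟨restR F hF, restR_good hF⟩⟩,
      Subtype.ext (glue_rest hF)⟩

noncomputable instance goodFintype (m : ℕ) : Fintype (Good m) := Fintype.ofFinite _

lemma card_good_succ (n : ℕ) :
    Nat.card (Good (n+1)) = ∑ t : Fin (n+1), Nat.card (Good t.1) * Nat.card (Good (n - t.1)) := by
  rw [← Nat.card_eq_of_bijective _ (glueMap_bijective n)]
  simp only [Nat.card_eq_fintype_card, Fintype.card_sigma, Fintype.card_prod]

instance : Unique (Good 0) where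
  default := ⟨fun x _ => x.elim0, by
    refine ⟨?_, ?_, ?_, ?_⟩ <;> intro x <;> exact x.elim0⟩
  uniq := fun a => Subtype.ext (funext fun x => x.elim0)

lemma card_good (n : ℕ) : Nat.card (Good n) = catalan n := by
  induction n using Nat.strong_induction_on with
  | _ n ih =>
    match n with
    | 0 => rw [catalan_zero]; exact Nat.card_unique
    | Nat.succ m =>
      rw [card_good_succ m, catalan_succ m]
      apply Finset.sum_congr rfl
      intro t _
      rw [ih t.1 (by exact lt_of_lt_of_le t.isLt (le_refl _)), ih (m - t.1) (by omega)]

end Counting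

section OrderSide

variable {n : ℕ} {p : Fin n → Fin n → Prop}

lemma isSup_swap {x y s : Fin n} (h : IsSupOf p x y s) : IsSupOf p y x s :=
  ⟨h.2.1, h.1, fun z hy hx => h.2.2 z hx hy⟩

lemma isSup_self (hp : IsNondecSemilatticeOrder n p) (x : Fin n) : IsSupOf p x x x :=
  ⟨hp.1 x, hp.1 x, fun z hz _ => hz⟩

lemma sup_unique (hp : IsNondecSemilatticeOrder n p) {x y s s' : Fin n}
    (h1 : IsSupOf p x y s) (h2 : IsSupOf p x y s') : s = s' :=
  hp.2.1 s s' (h1.2.2 s' h2.1 h2.2.1) (h2.2.2 s h1.1 h1.2.1)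

lemma sup_bounds_le (hp : IsNondecSemilatticeOrder n p) {x y s : Fin n}
    (hxy : x.1 ≤ y.1) (h : IsSupOf p x y s) : x.1 ≤ s.1 ∧ s.1 ≤ y.1 := by
  rcases Nat.eq_or_lt_of_le hxy with heq | hlt
  · have hxyeq : x = y := Fin.ext heq
    subst hxyeq
    have hs : s = x := sup_unique hp h (isSup_self hp x)
    subst hs
    omega
  · constructor
    · by_contra hc
      push_neg at hc
      exact (hp.2.2.2.2.2 s x y s (Fin.lt_def.mpr hc) (Fin.lt_def.mpr hlt)).1 h rfl
    · by_contra hc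
      push_neg at hc
      exact (hp.2.2.2.2.2 x y s s (Fin.lt_def.mpr hlt) (Fin.lt_def.mpr hc)).2 h rfl

lemma sup_bounds (hp : IsNondecSemilatticeOrder n p) {x y s : Fin n}
    (h : IsSupOf p x y s) : min x.1 y.1 ≤ s.1 ∧ s.1 ≤ max x.1 y.1 := by
  rcases le_total x.1 y.1 with hle | hle
  · have := sup_bounds_le hp hle h
    omega
  · have := sup_bounds_le hp hle (isSup_swap h)
    omega

noncomputable def supFun (p : Fin n → Fin n → Prop) (hp : IsNondecSemilatticeOrder n p) :
    Fin n → Fin n → Fin n := fun x y => (hp.2.2.2.1 x y).choose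

lemma supFun_isSup (hp : IsNondecSemilatticeOrder n p) {x y : Fin n} :
    IsSupOf p x y (supFun p hp x y) := (hp.2.2.2.1 x y).choose_spec

lemma supFun_comm (hp : IsNondecSemilatticeOrder n p) (x y : Fin n) :
    supFun p hp x y = supFun p hp y x :=
  sup_unique hp (supFun_isSup hp) (isSup_swap (supFun_isSup hp))

lemma supFun_idem (hp : IsNondecSemilatticeOrder n p) (x : Fin n) :
    supFun p hp x x = x :=
  sup_unique hp (supFun_isSup hp) (isSup_self hp x)

lemma supFun_assoc (hp : IsNondecSemilatticeOrder n p) (x y z : Fin n) :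
    supFun p hp x (supFun p hp y z) = supFun p hp (supFun p hp x y) z := by
  have hyz := supFun_isSup hp (x := y) (y := z)
  have hxy := supFun_isSup hp (x := x) (y := y)
  have hA := supFun_isSup hp (x := x) (y := supFun p hp y z)
  have hB := supFun_isSup hp (x := supFun p hp x y) (y := z)
  set A := supFun p hp x (supFun p hp y z)
  set B := supFun p hp (supFun p hp x y) z
  have pxA : p x A := hA.1
  have pyA : p y A := hp.2.2.1 y (supFun p hp y z) A hyz.1 hA.2.1
  have pzA : p z A := hp.2.2.1 z (supFun p hp y z) A hyz.2.1 hA.2.1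
  have pxB : p x B := hp.2.2.1 x (supFun p hp x y) B hxy.1 hB.1
  have pyB : p y B := hp.2.2.1 y (supFun p hp x y) B hxy.2.1 hB.1
  have pzB : p z B := hB.2.1
  have pAB : p A B := hA.2.2 B pxB (hyz.2.2 B pyB pzB)
  have pBA : p B A := hB.2.2 A (hxy.2.2 A pxA pyA) pzA
  exact hp.2.1 A B pAB pBA

lemma supFun_mono_right (hp : IsNondecSemilatticeOrder n p) {x y y' : Fin n}
    (h : y.1 ≤ y'.1) : (supFun p hp x y).1 ≤ (supFun p hp x y').1 := by
  have Hs := supFun_isSup hp (x := x) (y := y)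
  have Hs' := supFun_isSup hp (x := x) (y := y')
  set s := supFun p hp x y with hsdef
  set s' := supFun p hp x y' with hs'def
  have Bs := sup_bounds hp Hs
  have Bs' := sup_bounds hp Hs'
  by_cases hxy : x.1 ≤ y.1
  · -- x ≤ y ≤ y'
    by_contra hc
    push_neg at hc
    have h1 : p s s' := hp.2.2.2.2.1 x s y' s' (Fin.le_def.mpr (by omega))
        (Fin.le_def.mpr (by omega)) Hs'
    have h2 : IsSupOf p s y' s' :=
      ⟨h1, Hs'.2.1, fun z hz1 hz2 => Hs'.2.2 z (hp.2.2.1 x s z Hs.1 hz1) hz2⟩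
    have hsy' : s.1 < y'.1 := by
      rcases Nat.lt_or_ge s.1 y'.1 with h' | h'
      · exact h'
      · exfalso
        have he : s = y' := Fin.ext (by omega)
        rw [he] at h2
        have he2 : s' = y' := sup_unique hp h2 (isSup_self hp y')
        have := congrArg Fin.val he
        have := congrArg Fin.val he2
        omega
    exact (hp.2.2.2.2.2 s' s y' s' (Fin.lt_def.mpr hc) (Fin.lt_def.mpr hsy')).1 h2 rfl
  · by_cases hxy' : x.1 ≤ y'.1
    · omega
    · -- y ≤ y' < x
      by_contra hc
      push_neg at hc
      have h1 : p s' s := hp.2.2.2.2.1 y s' x s (Fin.le_def.mpr (by omega))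
          (Fin.le_def.mpr (by omega)) (isSup_swap Hs)
      have h2 : IsSupOf p y s' s :=
        ⟨Hs.2.1, h1, fun z hz1 hz2 => Hs.2.2 z (hp.2.2.1 x s' z Hs'.1 hz2) hz1⟩
      have hys' : y.1 < s'.1 := by
        rcases Nat.lt_or_ge y.1 s'.1 with h' | h'
        · exact h'
        · exfalso
          have he : y = s' := Fin.ext (by omega)
          rw [← he] at h2
          have he2 : s = y := sup_unique hp h2 (isSup_self hp y)
          have := congrArg Fin.val he
          have := congrArg Fin.val he2
          omega
      exact (hp.2.2.2.2.2 y s' s s (Fin.lt_def.mpr hys') (Fin.lt_def.mpr hc)).2 h2 rfl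

lemma supFun_good (hp : IsNondecSemilatticeOrder n p) : GoodProp n (supFun p hp) := by
  refine ⟨supFun_assoc hp, supFun_comm hp, supFun_idem hp, ?_⟩
  intro x y z w hxz hyw
  rw [Fin.le_def]
  calc (supFun p hp x y).1 ≤ (supFun p hp x w).1 := supFun_mono_right hp (Fin.le_def.mp hyw)
    _ = (supFun p hp w x).1 := by rw [supFun_comm]
    _ ≤ (supFun p hp w z).1 := supFun_mono_right hp (Fin.le_def.mp hxz)
    _ = (supFun p hp z w).1 := by rw [supFun_comm]

lemma p_iff_supFun (hp : IsNondecSemilatticeOrder n p) {x y : Fin n} :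
    p x y ↔ supFun p hp x y = y := by
  constructor
  · intro h
    exact sup_unique hp (supFun_isSup hp) ⟨h, hp.1 y, fun z _ hz => hz⟩
  · intro h
    have := (supFun_isSup hp (x := x) (y := y)).1
    rwa [h] at this

end OrderSide

section OpToOrder

variable {n : ℕ} {F : Fin n → Fin n → Fin n}

def pOf (F : Fin n → Fin n → Fin n) : Fin n → Fin n → Prop := fun x y => F x y = y

lemma pOf_isSup (hF : GoodProp n F) (x y : Fin n) : IsSupOf (pOf F) x y (F x y) := by
  refine ⟨?_, ?_, ?_⟩
  · show F x (F x y) = F x y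
    rw [hF.1, hF.2.2.1]
  · show F y (F x y) = F x y
    rw [hF.2.1 x y, hF.1, hF.2.2.1]
  · intro z h1 h2
    show F (F x y) z = z
    rw [← hF.1]
    show F x (F y z) = z
    rw [show F y z = z from h2]
    exact h1

lemma pOf_sup_eq (hF : GoodProp n F) {x y s : Fin n} (h : IsSupOf (pOf F) x y s) :
    s = F x y := by
  have hs2 := pOf_isSup hF x y
  have h1 : F s (F x y) = F x y := h.2.2 _ hs2.1 hs2.2.1
  have h2 : F (F x y) s = s := hs2.2.2 _ h.1 h.2.1
  rw [← h2, hF.2.1 (F x y) s, h1]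

lemma pOf_good (hF : GoodProp n F) : IsNondecSemilatticeOrder n (pOf F) := by
  refine ⟨?_, ?_, ?_, ?_, ?_, ?_⟩
  · intro x
    exact hF.2.2.1 x
  · intro x y h1 h2
    show x = y
    rw [← h2]
    show F y x = y
    rw [hF.2.1 y x]
    exact h1
  · intro x y z h1 h2
    show F x z = z
    conv_lhs => rw [← h2]
    rw [hF.1]
    show F (F x y) z = z
    rw [show F x y = y from h1]
    exact h2
  · intro x y
    exact ⟨F x y, pOf_isSup hF x y⟩
  · intro a b c s hab hbc hsup
    have he : s = F a c := pOf_sup_eq hF hsup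
    subst he
    show F b (F a c) = F a c
    have e1 : F a (F a c) = F a c := by rw [hF.1, hF.2.2.1]
    have e2 : F c (F a c) = F a c := by
      rw [hF.2.1 a c, hF.1, hF.2.2.1]
    have l1 := hF.2.2.2 a (F a c) b (F a c) hab le_rfl
    have l2 := hF.2.2.2 b (F a c) c (F a c) hbc le_rfl
    rw [e1] at l1
    rw [e2] at l2
    exact le_antisymm l2 l1
  · intro a b c s hab hbc
    constructor
    · intro hsup heq
      have he : s = F b c := pOf_sup_eq hF hsup
      have hmin := good_min_le hF (x := b) (y := c)
      have h1 := congrArg Fin.val he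
      have h2 := congrArg Fin.val heq
      have h3 := Fin.lt_def.mp hab
      have h4 := Fin.lt_def.mp hbc
      omega
    · intro hsup heq
      have he : s = F a b := pOf_sup_eq hF hsup
      have hmax := good_le_max hF (x := a) (y := b)
      have h1 := congrArg Fin.val he
      have h2 := congrArg Fin.val heq
      have h3 := Fin.lt_def.mp hab
      have h4 := Fin.lt_def.mp hbc
      omega

end OpToOrder

section Final

noncomputable def toOp {n : ℕ} (P : {p : Fin n → Fin n → Prop // IsNondecSemilatticeOrder n p}) :
    Good n := ⟨supFun P.1 P.2, supFun_good P.2⟩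

lemma toOp_bijective (n : ℕ) : Function.Bijective (toOp (n := n)) := by
  constructor
  · rintro ⟨p, hp⟩ ⟨q, hq⟩ h
    have hfun : supFun p hp = supFun q hq := congrArg Subtype.val h
    apply Subtype.ext
    funext x y
    apply propext
    show p x y ↔ q x y
    rw [p_iff_supFun hp, p_iff_supFun hq, hfun]
  · rintro ⟨F, hF⟩
    refine ⟨⟨pOf F, pOf_good hF⟩, Subtype.ext ?_⟩
    funext x y
    exact sup_unique (pOf_good hF) (supFun_isSup (pOf_good hF)) (pOf_isSup hF x y)

theorem catalan_formula (n : ℕ) :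
    (2*n).factorial / (n.factorial * (n+1).factorial) = catalan n := by
  have h1 := succ_mul_catalan_eq_centralBinom n
  have h2 := Nat.choose_mul_factorial_mul_factorial (Nat.le_mul_of_pos_left n (by norm_num) : n ≤ 2*n)
  have h3 : Nat.centralBinom n = (2*n).choose n := rfl
  have hn : 2*n - n = n := by omega
  rw [hn] at h2
  have h : (2*n).factorial = catalan n * (n.factorial * (n+1).factorial) := by
    rw [Nat.factorial_succ]
    calc (2*n).factorial = (2*n).choose n * n.factorial * n.factorial := h2.symm
      _ = (n+1) * catalan n * n.factorial * n.factorial := by rw [h1, h3]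
      _ = catalan n * (n.factorial * ((n+1) * n.factorial)) := by ring
  rw [h, Nat.mul_div_cancel _ (by positivity)]

end Final

/-- The number of nondecreasing join-semilattice orders on the n-element chain
is the n-th Catalan number; equivalently, so is the number of associative,
idempotent, symmetric, order-preserving binary operations. -/
theorem stmt_10 (n : ℕ) :
    Nat.card {p : Fin n → Fin n → Prop // IsNondecSemilatticeOrder n p} =
      (2 * n).factorial / (n.factorial * (n + 1).factorial) ∧
    Nat.card {F : Fin n → Fin n → Fin n //
        (∀ x y z, F x (F y z) = F (F x y) z) ∧
        (∀ x y, F x y = F y x) ∧ (∀ x, F x x = x) ∧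
        (∀ x y z t : Fin n, x ≤ z → y ≤ t → F x y ≤ F z t)} =
      (2 * n).factorial / (n.factorial * (n + 1).factorial) := by
  have hB : Nat.card (Good n) = (2 * n).factorial / (n.factorial * (n + 1).factorial) :=
    (card_good n).trans (catalan_formula n).symm
  constructor
  · calc Nat.card {p : Fin n → Fin n → Prop // IsNondecSemilatticeOrder n p}
        = Nat.card (Good n) := Nat.card_eq_of_bijective _ (toOp_bijective n)
      _ = _ := hB
  · exact hB
end

section
/- Let F : Xₙ² → Xₙ be an idempotent ≤ₙ-preserving operation on the chain Xₙ = {1,...,n}, and a ∈ Xₙ. Then a is a zero element of F if and only if the number of pairs (x,y) with F(x,y) = a equals 2a(n−a+1) − 1. -/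
/-- For an idempotent order-preserving operation on the n-element chain
{1,...,n} (encoded as `Fin n`, where `a : Fin n` represents a+1 ∈ {1,...,n}):
a is a zero element iff deg_F(a) = 2a(n-a+1) - 1. -/
theorem stmt_15 (n : ℕ) (F : Fin n → Fin n → Fin n)
    (hidem : ∀ x, F x x = x)
    (hmono : ∀ x y z t : Fin n, x ≤ z → y ≤ t → F x y ≤ F z t)
    (a : Fin n) :
    (∀ x, F a x = a ∧ F x a = a) ↔
      ((Finset.univ : Finset (Fin n × Fin n)).filter
          (fun q => F q.1 q.2 = a)).card =
        2 * (a.val + 1) * (n - a.val) - 1 := by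
  have hmin : ∀ x y : Fin n, min x y ≤ F x y := by
    intro x y
    calc min x y = F (min x y) (min x y) := (hidem _).symm
    _ ≤ F x y := hmono _ _ _ _ (min_le_left _ _) (min_le_right _ _)
  have hmax : ∀ x y : Fin n, F x y ≤ max x y := by
    intro x y
    calc F x y ≤ F (max x y) (max x y) :=
      hmono _ _ _ _ (le_max_left _ _) (le_max_right _ _)
    _ = max x y := hidem _
  set S := (Finset.univ : Finset (Fin n × Fin n)).filter
      (fun q => (q.1 ≤ a ∧ a ≤ q.2) ∨ (q.2 ≤ a ∧ a ≤ q.1)) with hS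
  have hsub : ((Finset.univ : Finset (Fin n × Fin n)).filter
      (fun q => F q.1 q.2 = a)) ⊆ S := by
    intro q hq
    simp only [hS, Finset.mem_filter, Finset.mem_univ, true_and] at hq ⊢
    have h1 : q.1 ≤ a ∨ q.2 ≤ a := min_le_iff.mp (hq ▸ hmin q.1 q.2)
    have h2 : a ≤ q.1 ∨ a ≤ q.2 := le_max_iff.mp (hq ▸ hmax q.1 q.2)
    rcases le_total q.1 a with h3 | h3 <;> rcases le_total q.2 a with h4 | h4 <;> tauto
  have hScard : S.card = 2 * (a.val + 1) * (n - a.val) - 1 := by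
    have hA : (Finset.univ : Finset (Fin n × Fin n)).filter
        (fun q => q.1 ≤ a ∧ a ≤ q.2) = Finset.Iic a ×ˢ Finset.Ici a := by
      ext q; simp [Finset.mem_product]
    have hB : (Finset.univ : Finset (Fin n × Fin n)).filter
        (fun q => q.2 ≤ a ∧ a ≤ q.1) = Finset.Ici a ×ˢ Finset.Iic a := by
      ext q; simp [Finset.mem_product, and_comm]
    have hAB : ((Finset.Iic a ×ˢ Finset.Ici a) ∩ (Finset.Ici a ×ˢ Finset.Iic a))
        = {(a, a)} := by
      ext q
      simp only [Finset.mem_inter, Finset.mem_product, Finset.mem_Iic, Finset.mem_Ici,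
        Finset.mem_singleton, Prod.ext_iff]
      constructor
      · rintro ⟨⟨h1, h2⟩, h3, h4⟩
        exact ⟨le_antisymm h1 h3, le_antisymm h4 h2⟩
      · rintro ⟨h1, h2⟩; simp [h1, h2]
    have hcardA : (Finset.Iic a ×ˢ Finset.Ici a).card = (a.val + 1) * (n - a.val) := by
      rw [Finset.card_product, Fin.card_Iic, Fin.card_Ici]
    have hcardB : (Finset.Ici a ×ˢ Finset.Iic a).card = (a.val + 1) * (n - a.val) := by
      rw [Finset.card_product, Fin.card_Iic, Fin.card_Ici, Nat.mul_comm]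
    have hSU : S = (Finset.Iic a ×ˢ Finset.Ici a) ∪ (Finset.Ici a ×ˢ Finset.Iic a) := by
      rw [hS, Finset.filter_or, hA, hB]
    have key := Finset.card_union_add_card_inter
      (Finset.Iic a ×ˢ Finset.Ici a) (Finset.Ici a ×ˢ Finset.Iic a)
    rw [hAB, hcardA, hcardB, Finset.card_singleton] at key
    have hpos : 0 < (a.val + 1) * (n - a.val) :=
      Nat.mul_pos (Nat.succ_pos _) (Nat.sub_pos_of_lt a.isLt)
    rw [hSU]
    have h2 : 2 * (a.val + 1) * (n - a.val)
        = (a.val + 1) * (n - a.val) + (a.val + 1) * (n - a.val) := by ring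
    omega
  constructor
  · intro h
    have heq : ((Finset.univ : Finset (Fin n × Fin n)).filter
        (fun q => F q.1 q.2 = a)) = S := by
      apply Finset.Subset.antisymm hsub
      intro q hq
      simp only [hS, Finset.mem_filter, Finset.mem_univ, true_and] at hq ⊢
      rcases hq with ⟨h1, h2⟩ | ⟨h1, h2⟩
      · exact le_antisymm (le_of_le_of_eq (hmono _ _ a q.2 h1 le_rfl) (h q.2).1)
          (le_of_eq_of_le (h q.1).2.symm (hmono q.1 a _ _ le_rfl h2))
      · exact le_antisymm (le_of_le_of_eq (hmono _ _ q.1 a le_rfl h1) (h q.1).2)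
          (le_of_eq_of_le (h q.2).1.symm (hmono a q.2 _ _ h2 le_rfl))
    rw [heq, hScard]
  · intro hcard
    have heq : ((Finset.univ : Finset (Fin n × Fin n)).filter
        (fun q => F q.1 q.2 = a)) = S :=
      Finset.eq_of_subset_of_card_le hsub (by rw [hcard, hScard])
    intro x
    have hx : ∀ p : Fin n × Fin n, p ∈ S → F p.1 p.2 = a := by
      intro p hp
      rw [← heq] at hp
      simpa using hp
    constructor
    · apply hx (a, x)
      simp only [hS, Finset.mem_filter, Finset.mem_univ, true_and]
      rcases le_total x a with h | h
      · exact Or.inr ⟨h, le_rfl⟩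
      · exact Or.inl ⟨le_rfl, h⟩
    · apply hx (x, a)
      simp only [hS, Finset.mem_filter, Finset.mem_univ, true_and]
      rcases le_total x a with h | h
      · exact Or.inl ⟨h, le_rfl⟩
      · exact Or.inr ⟨le_rfl, h⟩
end

section
/- Let the sequence β : ℕ → ℕ count the join-semilattice orders on Xₙ = {1,...,n} that are internal for ≤ₙ and have the linear filter property. Then β(0) = β(1) = 1 and β(n) = Σ_{i=1}^{n−2} β(i)·β(n−i−1) + n·β(n−1) for n ≥ 2. -/
/-- `p` is a join-semilattice order on `Fin n` that is internal for the natural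
order and has the linear filter property (no two incomparable elements have a
common lower bound). -/
def IsInternalLFSemilatticeOrder (n : ℕ) (p : Fin n → Fin n → Prop) : Prop :=
  (∀ x, p x x) ∧ (∀ x y, p x y → p y x → x = y) ∧
  (∀ x y z, p x y → p y z → p x z) ∧
  (∀ x y, ∃ s, IsSupOf p x y s) ∧
  (∀ a b c s : Fin n, a < b → b < c →
    (IsSupOf p b c s → s ≠ a) ∧ (IsSupOf p a b s → s ≠ c)) ∧
  (¬ ∃ x y z : Fin n, ¬ p x y ∧ ¬ p y x ∧ p z x ∧ p z y)

/-- The number of internal semilattice orders with the linear filter property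
on the n-element chain. -/
noncomputable def β (n : ℕ) : ℕ :=
  Nat.card {p : Fin n → Fin n → Prop // IsInternalLFSemilatticeOrder n p}

namespace Stmt18

abbrev S (k : ℕ) := {p : Fin k → Fin k → Prop // IsInternalLFSemilatticeOrder k p}

section Basic

variable {k : ℕ} {p : Fin k → Fin k → Prop}

lemma hrefl (hp : IsInternalLFSemilatticeOrder k p) : ∀ x, p x x := hp.1
lemma hanti (hp : IsInternalLFSemilatticeOrder k p) : ∀ x y, p x y → p y x → x = y := hp.2.1
lemma htrans (hp : IsInternalLFSemilatticeOrder k p) : ∀ x y z, p x y → p y z → p x z := hp.2.2.1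
lemma hsup (hp : IsInternalLFSemilatticeOrder k p) : ∀ x y, ∃ s, IsSupOf p x y s := hp.2.2.2.1
lemma hint (hp : IsInternalLFSemilatticeOrder k p) :
    ∀ a b c s : Fin k, a < b → b < c →
      (IsSupOf p b c s → s ≠ a) ∧ (IsSupOf p a b s → s ≠ c) := hp.2.2.2.2.1
lemma hLF (hp : IsInternalLFSemilatticeOrder k p) :
    ∀ x y z : Fin k, p z x → p z y → p x y ∨ p y x := by
  intro x y z h1 h2
  by_contra h
  push_neg at h
  exact hp.2.2.2.2.2 ⟨x, y, z, h.1, h.2, h1, h2⟩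

lemma sup_unique (hp : IsInternalLFSemilatticeOrder k p) {x y s s' : Fin k}
    (h : IsSupOf p x y s) (h' : IsSupOf p x y s') : s = s' :=
  hanti hp s s' (h.2.2 s' h'.1 h'.2.1) (h'.2.2 s h.1 h.2.1)

lemma sup_comm {x y s : Fin k} (h : IsSupOf p x y s) : IsSupOf p y x s :=
  ⟨h.2.1, h.1, fun z h1 h2 => h.2.2 z h2 h1⟩

lemma sup_self (hp : IsInternalLFSemilatticeOrder k p) {x s : Fin k}
    (h : IsSupOf p x x s) : s = x :=
  hanti hp s x (h.2.2 x (hrefl hp x) (hrefl hp x)) h.1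

/-- internality: the sup lies (w.r.t. the natural order) between its arguments. -/
lemma sup_between (hp : IsInternalLFSemilatticeOrder k p) {x y s : Fin k}
    (hxy : x < y) (h : IsSupOf p x y s) : x ≤ s ∧ s ≤ y := by
  rcases lt_trichotomy s x with hs | hs | hs
  · exact absurd rfl ((hint hp s x y s hs hxy).1 h)
  · exact ⟨le_of_eq hs.symm, (hs ▸ hxy).le⟩
  · rcases lt_trichotomy s y with hs' | hs' | hs'
    · exact ⟨le_of_lt hs, le_of_lt hs'⟩
    · exact ⟨le_of_lt hs, le_of_eq hs'⟩
    · exact absurd rfl ((hint hp x y s s hxy hs').2 h)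

lemma sup_between' (hp : IsInternalLFSemilatticeOrder k p) {x y s : Fin k}
    (h : IsSupOf p x y s) : (min x.val y.val ≤ s.val ∧ s.val ≤ max x.val y.val) := by
  rcases lt_trichotomy x y with hxy | hxy | hxy
  · have h2 := sup_between hp hxy h
    have h3 : x.val ≤ s.val := h2.1
    have h4 : s.val ≤ y.val := h2.2
    omega
  · subst hxy
    have := sup_self hp h
    subst this
    omega
  · have h2 := sup_between hp hxy (sup_comm h)
    have h3 : y.val ≤ s.val := h2.1
    have h4 : s.val ≤ x.val := h2.2
    omega

lemma exists_top (hp : IsInternalLFSemilatticeOrder k p) (hk : 0 < k) :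
    ∃ t, ∀ x, p x t := by
  have key : ∀ l : List (Fin k), ∃ t, ∀ x ∈ l, p x t := by
    intro l
    induction l with
    | nil => exact ⟨⟨0, hk⟩, by simp⟩
    | cons a l ih =>
      obtain ⟨t, ht⟩ := ih
      obtain ⟨s, hs⟩ := hsup hp a t
      refine ⟨s, ?_⟩
      intro x hx
      rcases List.mem_cons.mp hx with rfl | hx
      · exact hs.1
      · exact htrans hp x t s (ht x hx) hs.2.1
  obtain ⟨t, ht⟩ := key (List.finRange k)
  exact ⟨t, fun x => ht x (List.mem_finRange x)⟩

lemma top_unique (hp : IsInternalLFSemilatticeOrder k p) {t t' : Fin k}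
    (h : ∀ x, p x t) (h' : ∀ x, p x t') : t = t' :=
  hanti hp t t' (h' t) (h t')

end Basic

section Restrict

variable {k n : ℕ} {p : Fin n → Fin n → Prop}

/-- restriction of a relation along a map -/
lemma restrict_sup (hp : IsInternalLFSemilatticeOrder n p) {e : Fin k → Fin n}
    {a b : Fin k} {s : Fin k} (h : IsSupOf p (e a) (e b) (e s)) :
    IsSupOf (fun a b => p (e a) (e b)) a b s :=
  ⟨h.1, h.2.1, fun z h1 h2 => h.2.2 (e z) h1 h2⟩

lemma restrict_valid (hp : IsInternalLFSemilatticeOrder n p) (e : Fin k → Fin n)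
    (he : StrictMono e)
    (hcl : ∀ a b s, IsSupOf p (e a) (e b) s → ∃ c, e c = s) :
    IsInternalLFSemilatticeOrder k (fun a b => p (e a) (e b)) := by
  set q : Fin k → Fin k → Prop := fun a b => p (e a) (e b) with hq
  have qanti : ∀ x y, q x y → q y x → x = y := fun x y h1 h2 =>
    he.injective (hanti hp _ _ h1 h2)
  -- transfer of sups
  have lift : ∀ a b s, IsSupOf q a b s → IsSupOf p (e a) (e b) (e s) := by
    intro a b s hs
    obtain ⟨s', hs'⟩ := hsup hp (e a) (e b)
    obtain ⟨c, rfl⟩ := hcl a b s' hs'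
    have : c = s := by
      have h1 : IsSupOf q a b c := restrict_sup hp hs'
      exact qanti c s (h1.2.2 s hs.1 hs.2.1) (hs.2.2 c h1.1 h1.2.1)
    subst this
    exact hs'
  refine ⟨fun x => hrefl hp (e x), qanti, fun x y z h1 h2 => htrans hp _ _ _ h1 h2, ?_, ?_, ?_⟩
  · intro a b
    obtain ⟨s, hs⟩ := hsup hp (e a) (e b)
    obtain ⟨c, rfl⟩ := hcl a b s hs
    exact ⟨c, restrict_sup hp hs⟩
  · intro a b c s hab hbc
    constructor
    · intro hs
      have := (hint hp (e a) (e b) (e c) (e s) (he hab) (he hbc)).1 (lift _ _ _ hs)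
      exact fun h => this (congrArg e h)
    · intro hs
      have := (hint hp (e a) (e b) (e c) (e s) (he hab) (he hbc)).2 (lift _ _ _ hs)
      exact fun h => this (congrArg e h)
  · rintro ⟨x, y, z, h1, h2, h3, h4⟩
    exact hp.2.2.2.2.2 ⟨e x, e y, e z, h1, h2, h3, h4⟩

end Restrict

section CaseA

variable {m : ℕ} (r : Fin (m + 2)) (q : Fin (m + 1) → Fin (m + 1) → Prop)

/-- put `r` on top of `q` (relabelled to avoid `r`). -/
def pA : Fin (m + 2) → Fin (m + 2) → Prop :=
  fun x y => y = r ∨ ∃ a b, x = r.succAbove a ∧ y = r.succAbove b ∧ q a b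

variable {r q}

lemma pA_top : ∀ x, pA r q x r := fun _ => Or.inl rfl

lemma pA_emb {a b : Fin (m + 1)} : pA r q (r.succAbove a) (r.succAbove b) ↔ q a b := by
  constructor
  · rintro (h | ⟨a', b', ha, hb, hq⟩)
    · exact absurd h (Fin.succAbove_ne r b)
    · rw [Fin.succAbove_right_inj] at ha hb
      rwa [ha, hb]
  · intro h
    exact Or.inr ⟨a, b, rfl, rfl, h⟩

lemma pA_of_r {y : Fin (m + 2)} (h : pA r q r y) : y = r := by
  rcases h with h | ⟨a, b, ha, _, _⟩
  · exact h
  · exact absurd ha.symm (Fin.succAbove_ne r a)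

lemma pA_sup_emb (hq : IsInternalLFSemilatticeOrder (m + 1) q) {a b s : Fin (m + 1)}
    (hs : IsSupOf q a b s) :
    IsSupOf (pA r q) (r.succAbove a) (r.succAbove b) (r.succAbove s) := by
  refine ⟨pA_emb.mpr hs.1, pA_emb.mpr hs.2.1, ?_⟩
  intro z h1 h2
  rcases eq_or_ne z r with rfl | hz
  · exact Or.inl rfl
  · obtain ⟨c, rfl⟩ := Fin.exists_succAbove_eq hz
    exact pA_emb.mpr (hs.2.2 c (pA_emb.mp h1) (pA_emb.mp h2))

lemma pA_sup_r {x : Fin (m + 2)} : IsSupOf (pA r q) x r r :=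
  ⟨pA_top x, Or.inl rfl, fun z _ h2 => h2⟩

lemma pA_valid (hq : IsInternalLFSemilatticeOrder (m + 1) q) :
    IsInternalLFSemilatticeOrder (m + 2) (pA r q) := by
  have anti : ∀ x y, pA r q x y → pA r q y x → x = y := by
    intro x y h1 h2
    rcases eq_or_ne y r with rfl | hy
    · exact pA_of_r h2
    rcases eq_or_ne x r with rfl | hx
    · exact (pA_of_r h1).symm
    obtain ⟨a, rfl⟩ := Fin.exists_succAbove_eq hx
    obtain ⟨b, rfl⟩ := Fin.exists_succAbove_eq hy
    exact congrArg _ (hanti hq a b (pA_emb.mp h1) (pA_emb.mp h2))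
  have supex : ∀ x y, ∃ s, IsSupOf (pA r q) x y s := by
    intro x y
    rcases eq_or_ne y r with rfl | hy
    · exact ⟨y, pA_sup_r⟩
    rcases eq_or_ne x r with rfl | hx
    · exact ⟨x, sup_comm pA_sup_r⟩
    obtain ⟨a, rfl⟩ := Fin.exists_succAbove_eq hx
    obtain ⟨b, rfl⟩ := Fin.exists_succAbove_eq hy
    obtain ⟨s, hs⟩ := hsup hq a b
    exact ⟨r.succAbove s, pA_sup_emb hq hs⟩
  have supuniq : ∀ {x y s s'}, IsSupOf (pA r q) x y s → IsSupOf (pA r q) x y s' → s = s' :=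
    fun h h' => anti _ _ (h.2.2 _ h'.1 h'.2.1) (h'.2.2 _ h.1 h.2.1)
  -- transfer a sup statement down to q
  have lower : ∀ {a b s : Fin (m + 1)},
      IsSupOf (pA r q) (r.succAbove a) (r.succAbove b) (r.succAbove s) → IsSupOf q a b s := by
    intro a b s h
    refine ⟨pA_emb.mp h.1, pA_emb.mp h.2.1, ?_⟩
    intro z h1 h2
    exact pA_emb.mp (h.2.2 (r.succAbove z) (pA_emb.mpr h1) (pA_emb.mpr h2))
  have hmono := Fin.strictMono_succAbove r
  refine ⟨?_, anti, ?_, supex, ?_, ?_⟩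
  · intro x
    rcases eq_or_ne x r with rfl | hx
    · exact Or.inl rfl
    obtain ⟨a, rfl⟩ := Fin.exists_succAbove_eq hx
    exact pA_emb.mpr (hrefl hq a)
  · intro x y z h1 h2
    rcases eq_or_ne z r with rfl | hz
    · exact Or.inl rfl
    rcases eq_or_ne y r with rfl | hy
    · exact absurd (pA_of_r h2) hz
    rcases eq_or_ne x r with rfl | hx
    · exact absurd (pA_of_r h1) hy
    obtain ⟨a, rfl⟩ := Fin.exists_succAbove_eq hx
    obtain ⟨b, rfl⟩ := Fin.exists_succAbove_eq hy
    obtain ⟨c, rfl⟩ := Fin.exists_succAbove_eq hz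
    exact pA_emb.mpr (htrans hq a b c (pA_emb.mp h1) (pA_emb.mp h2))
  · have pA_dest : ∀ {x y}, pA r q x y → y ≠ r →
        ∃ a b, x = r.succAbove a ∧ y = r.succAbove b ∧ q a b := by
      rintro x y (h | h) hy
      · exact absurd h hy
      · exact h
    intro a b c s hab hbc
    constructor
    · intro hs heq
      subst heq
      rcases eq_or_ne s r with rfl | hsr
      · -- s = r is the sup of b, c, both ≠ r; but their sup is embedded
        have hbr : b ≠ s := hab.ne'
        have hcr : c ≠ s := (hab.trans hbc).ne'
        obtain ⟨b₀, rfl⟩ := Fin.exists_succAbove_eq hbr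
        obtain ⟨c₀, rfl⟩ := Fin.exists_succAbove_eq hcr
        obtain ⟨s₀, hs₀⟩ := hsup hq b₀ c₀
        exact Fin.succAbove_ne s s₀ (supuniq (pA_sup_emb hq hs₀) hs)
      · obtain ⟨b₀, s₀, rfl, rfl, -⟩ := pA_dest hs.1 hsr
        obtain ⟨c₀, s₀', rfl, heq, -⟩ := pA_dest hs.2.1 (Fin.succAbove_ne r s₀)
        rw [Fin.succAbove_right_inj] at heq
        subst heq
        have hq1 : IsSupOf q b₀ c₀ s₀ := lower hs
        have h1 : s₀ < b₀ := hmono.lt_iff_lt.mp hab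
        have h2 : b₀ < c₀ := hmono.lt_iff_lt.mp hbc
        exact (hint hq s₀ b₀ c₀ s₀ h1 h2).1 hq1 rfl
    · intro hs heq
      subst heq
      rcases eq_or_ne s r with rfl | hsr
      · have har : a ≠ s := (hab.trans hbc).ne
        have hbr : b ≠ s := hbc.ne
        obtain ⟨a₀, rfl⟩ := Fin.exists_succAbove_eq har
        obtain ⟨b₀, rfl⟩ := Fin.exists_succAbove_eq hbr
        obtain ⟨s₀, hs₀⟩ := hsup hq a₀ b₀
        exact Fin.succAbove_ne s s₀ (supuniq (pA_sup_emb hq hs₀) hs)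
      · obtain ⟨b₀, s₀, rfl, rfl, -⟩ := pA_dest hs.2.1 hsr
        obtain ⟨a₀, s₀', rfl, heq, -⟩ := pA_dest hs.1 (Fin.succAbove_ne r s₀)
        rw [Fin.succAbove_right_inj] at heq
        subst heq
        have hq1 : IsSupOf q a₀ b₀ s₀ := lower hs
        have h1 : a₀ < b₀ := hmono.lt_iff_lt.mp hab
        have h2 : b₀ < s₀ := hmono.lt_iff_lt.mp hbc
        exact (hint hq a₀ b₀ s₀ s₀ h1 h2).2 hq1 rfl
  · rintro ⟨x, y, z, h1, h2, h3, h4⟩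
    have hx : x ≠ r := fun h => h2 (h ▸ pA_top y)
    have hy : y ≠ r := fun h => h1 (h ▸ pA_top x)
    obtain ⟨a, rfl⟩ := Fin.exists_succAbove_eq hx
    obtain ⟨b, rfl⟩ := Fin.exists_succAbove_eq hy
    have hz : z ≠ r := fun h => by
      subst h
      exact absurd (pA_of_r h3).symm (Fin.succAbove_ne z a).symm
    obtain ⟨c, rfl⟩ := Fin.exists_succAbove_eq hz
    refine hq.2.2.2.2.2 ⟨a, b, c, ?_, ?_, pA_emb.mp h3, pA_emb.mp h4⟩
    · exact fun h => h1 (pA_emb.mpr h)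
    · exact fun h => h2 (pA_emb.mpr h)

end CaseA

section CaseB

variable {m i : ℕ}

def rI (m i : ℕ) (him : i ≤ m) : Fin (m + 2) := ⟨i, by omega⟩
def eL (m i : ℕ) (him : i ≤ m) : Fin i → Fin (m + 2) :=
  fun a => ⟨a.val, by have := a.isLt; omega⟩
def eH (m i : ℕ) : Fin (m + 1 - i) → Fin (m + 2) :=
  fun b => ⟨i + 1 + b.val, by have := b.isLt; omega⟩

variable {him : i ≤ m}

lemma eL_ne_r {a : Fin i} : eL m i him a ≠ rI m i him := by
  intro h
  have hv := congrArg Fin.val h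
  have ha := a.isLt
  simp only [eL, rI] at hv
  omega

lemma eH_ne_r {b : Fin (m + 1 - i)} : eH m i b ≠ rI m i him := by
  intro h
  have := congrArg Fin.val h
  simp only [eH, rI] at this
  omega

lemma eL_ne_eH {a : Fin i} {b : Fin (m + 1 - i)} : eL m i him a ≠ eH m i b := by
  intro h
  have hv := congrArg Fin.val h
  have ha := a.isLt
  simp only [eL, eH] at hv
  omega

lemma eL_strictMono : StrictMono (eL m i him) := by
  intro a b h
  rw [Fin.lt_def] at h ⊢
  exact h

lemma eH_strictMono : StrictMono (eH m i) := by
  intro a b h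
  rw [Fin.lt_def] at h ⊢
  show i + 1 + a.val < i + 1 + b.val
  omega

lemma eL_inj {a b : Fin i} (h : eL m i him a = eL m i him b) : a = b :=
  eL_strictMono.injective h

lemma eH_inj {a b : Fin (m + 1 - i)} (h : eH m i a = eH m i b) : a = b :=
  eH_strictMono.injective h

lemma eL_surj {x : Fin (m + 2)} (h : x.val < i) : ∃ a, eL m i him a = x :=
  ⟨⟨x.val, h⟩, by simp [eL]⟩

lemma eH_surj {x : Fin (m + 2)} (h : i < x.val) : ∃ b, eH m i b = x := by
  refine ⟨⟨x.val - i - 1, by have := x.isLt; omega⟩, ?_⟩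
  apply Fin.ext
  show i + 1 + (x.val - i - 1) = x.val
  omega

lemma trichB (him : i ≤ m) (x : Fin (m + 2)) :
    x = rI m i him ∨ (∃ a, eL m i him a = x) ∨ (∃ b, eH m i b = x) := by
  rcases lt_trichotomy x.val i with h | h | h
  · exact Or.inr (Or.inl (eL_surj h))
  · exact Or.inl (Fin.ext h)
  · exact Or.inr (Or.inr (eH_surj h))

variable (qL : Fin i → Fin i → Prop) (qH : Fin (m + 1 - i) → Fin (m + 1 - i) → Prop)

def pB (him : i ≤ m) : Fin (m + 2) → Fin (m + 2) → Prop := fun x y =>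
  y = rI m i him ∨ (∃ a b, x = eL m i him a ∧ y = eL m i him b ∧ qL a b) ∨
    (∃ a b, x = eH m i a ∧ y = eH m i b ∧ qH a b)

variable {qL qH}

lemma pB_xr {x : Fin (m + 2)} : pB qL qH him x (rI m i him) := Or.inl rfl

lemma pB_of_r {y : Fin (m + 2)} (h : pB qL qH him (rI m i him) y) : y = rI m i him := by
  rcases h with h | ⟨a, b, ha, _, _⟩ | ⟨a, b, ha, _, _⟩
  · exact h
  · exact absurd ha.symm eL_ne_r
  · exact absurd ha.symm eH_ne_r

lemma pB_LL {a b : Fin i} : pB qL qH him (eL m i him a) (eL m i him b) ↔ qL a b := by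
  constructor
  · rintro (h | ⟨a', b', ha, hb, h⟩ | ⟨a', b', ha, hb, h⟩)
    · exact absurd h eL_ne_r
    · rw [eL_inj ha, eL_inj hb]; exact h
    · exact absurd ha eL_ne_eH
  · intro h
    exact Or.inr (Or.inl ⟨a, b, rfl, rfl, h⟩)

lemma pB_HH {a b : Fin (m + 1 - i)} : pB qL qH him (eH m i a) (eH m i b) ↔ qH a b := by
  constructor
  · rintro (h | ⟨a', b', ha, hb, h⟩ | ⟨a', b', ha, hb, h⟩)
    · exact absurd h eH_ne_r
    · exact absurd ha.symm eL_ne_eH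
    · rw [eH_inj ha, eH_inj hb]; exact h
  · intro h
    exact Or.inr (Or.inr ⟨a, b, rfl, rfl, h⟩)

lemma pB_nLH {a : Fin i} {b : Fin (m + 1 - i)} : ¬ pB qL qH him (eL m i him a) (eH m i b) := by
  rintro (h | ⟨a', b', ha, hb, h⟩ | ⟨a', b', ha, hb, h⟩)
  · exact eH_ne_r h
  · exact eL_ne_eH hb.symm
  · exact eL_ne_eH ha
lemma pB_nHL {a : Fin (m + 1 - i)} {b : Fin i} : ¬ pB qL qH him (eH m i a) (eL m i him b) := by
  rintro (h | ⟨a', b', ha, hb, h⟩ | ⟨a', b', ha, hb, h⟩)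
  · exact eL_ne_r h
  · exact eL_ne_eH ha.symm
  · exact eL_ne_eH hb

lemma pB_fromL {a : Fin i} {y : Fin (m + 2)} (h : pB qL qH him (eL m i him a) y) :
    y = rI m i him ∨ ∃ b, y = eL m i him b ∧ qL a b := by
  rcases h with h | ⟨a', b', ha, hb, h⟩ | ⟨a', b', ha, hb, h⟩
  · exact Or.inl h
  · exact Or.inr ⟨b', hb, eL_inj ha ▸ h⟩
  · exact absurd ha eL_ne_eH

lemma pB_fromH {a : Fin (m + 1 - i)} {y : Fin (m + 2)} (h : pB qL qH him (eH m i a) y) :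
    y = rI m i him ∨ ∃ b, y = eH m i b ∧ qH a b := by
  rcases h with h | ⟨a', b', ha, hb, h⟩ | ⟨a', b', ha, hb, h⟩
  · exact Or.inl h
  · exact absurd ha.symm eL_ne_eH
  · exact Or.inr ⟨b', hb, eH_inj ha ▸ h⟩

lemma pB_destL {x : Fin (m + 2)} {b : Fin i} (h : pB qL qH him x (eL m i him b)) :
    ∃ a, x = eL m i him a ∧ qL a b := by
  rcases h with h | ⟨a', b', ha, hb, h⟩ | ⟨a', b', ha, hb, h⟩
  · exact absurd h eL_ne_r
  · exact ⟨a', ha, (eL_inj hb) ▸ h⟩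
  · exact absurd hb eL_ne_eH

lemma pB_destH {x : Fin (m + 2)} {b : Fin (m + 1 - i)} (h : pB qL qH him x (eH m i b)) :
    ∃ a, x = eH m i a ∧ qH a b := by
  rcases h with h | ⟨a', b', ha, hb, h⟩ | ⟨a', b', ha, hb, h⟩
  · exact absurd h eH_ne_r
  · exact absurd hb.symm eL_ne_eH
  · exact ⟨a', ha, (eH_inj hb) ▸ h⟩

lemma pB_sup_r {x : Fin (m + 2)} : IsSupOf (pB qL qH him) x (rI m i him) (rI m i him) :=
  ⟨pB_xr, Or.inl rfl, fun _ _ h2 => h2⟩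

lemma pB_sup_L {a b s : Fin i} (hs : IsSupOf qL a b s) :
    IsSupOf (pB qL qH him) (eL m i him a) (eL m i him b) (eL m i him s) := by
  refine ⟨pB_LL.mpr hs.1, pB_LL.mpr hs.2.1, ?_⟩
  intro z h1 h2
  rcases pB_fromL h1 with rfl | ⟨c, rfl, hc1⟩
  · exact pB_xr
  rcases pB_fromL h2 with h | ⟨c', hc', hc2⟩
  · exact absurd h eL_ne_r
  · rw [← eL_inj hc'] at hc2
    exact pB_LL.mpr (hs.2.2 c hc1 hc2)

lemma pB_sup_H {a b s : Fin (m + 1 - i)} (hs : IsSupOf qH a b s) :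
    IsSupOf (pB qL qH him) (eH m i a) (eH m i b) (eH m i s) := by
  refine ⟨pB_HH.mpr hs.1, pB_HH.mpr hs.2.1, ?_⟩
  intro z h1 h2
  rcases pB_fromH h1 with rfl | ⟨c, rfl, hc1⟩
  · exact pB_xr
  rcases pB_fromH h2 with h | ⟨c', hc', hc2⟩
  · exact absurd h eH_ne_r
  · rw [← eH_inj hc'] at hc2
    exact pB_HH.mpr (hs.2.2 c hc1 hc2)

lemma pB_sup_cross {a : Fin i} {b : Fin (m + 1 - i)} :
    IsSupOf (pB qL qH him) (eL m i him a) (eH m i b) (rI m i him) := by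
  refine ⟨pB_xr, pB_xr, ?_⟩
  intro z h1 h2
  rcases pB_fromL h1 with rfl | ⟨c, rfl, _⟩
  · exact Or.inl rfl
  rcases pB_fromH h2 with h | ⟨c', hc', _⟩
  · exact absurd h eL_ne_r
  · exact absurd hc' eL_ne_eH

lemma pB_lowL {a b s : Fin i}
    (hs : IsSupOf (pB qL qH him) (eL m i him a) (eL m i him b) (eL m i him s)) :
    IsSupOf qL a b s :=
  ⟨pB_LL.mp hs.1, pB_LL.mp hs.2.1,
    fun z h1 h2 => pB_LL.mp (hs.2.2 (eL m i him z) (pB_LL.mpr h1) (pB_LL.mpr h2))⟩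

lemma pB_lowH {a b s : Fin (m + 1 - i)}
    (hs : IsSupOf (pB qL qH him) (eH m i a) (eH m i b) (eH m i s)) :
    IsSupOf qH a b s :=
  ⟨pB_HH.mp hs.1, pB_HH.mp hs.2.1,
    fun z h1 h2 => pB_HH.mp (hs.2.2 (eH m i z) (pB_HH.mpr h1) (pB_HH.mpr h2))⟩

lemma pB_valid (hqL : IsInternalLFSemilatticeOrder i qL)
    (hqH : IsInternalLFSemilatticeOrder (m + 1 - i) qH) :
    IsInternalLFSemilatticeOrder (m + 2) (pB qL qH him) := by
  have anti : ∀ x y, pB qL qH him x y → pB qL qH him y x → x = y := by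
    intro x y h1 h2
    rcases trichB him y with rfl | ⟨b, rfl⟩ | ⟨b, rfl⟩
    · exact pB_of_r h2
    · obtain ⟨a, rfl, hab⟩ := pB_destL h1
      exact congrArg _ (hanti hqL a b hab (pB_LL.mp h2))
    · obtain ⟨a, rfl, hab⟩ := pB_destH h1
      exact congrArg _ (hanti hqH a b hab (pB_HH.mp h2))
  have supex : ∀ x y, ∃ s, IsSupOf (pB qL qH him) x y s := by
    intro x y
    rcases trichB him y with rfl | ⟨b, rfl⟩ | ⟨b, rfl⟩
    · exact ⟨_, pB_sup_r⟩
    · rcases trichB him x with rfl | ⟨a, rfl⟩ | ⟨a, rfl⟩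
      · exact ⟨_, sup_comm pB_sup_r⟩
      · obtain ⟨s, hs⟩ := hsup hqL a b
        exact ⟨_, pB_sup_L hs⟩
      · exact ⟨_, sup_comm pB_sup_cross⟩
    · rcases trichB him x with rfl | ⟨a, rfl⟩ | ⟨a, rfl⟩
      · exact ⟨_, sup_comm pB_sup_r⟩
      · exact ⟨_, pB_sup_cross⟩
      · obtain ⟨s, hs⟩ := hsup hqH a b
        exact ⟨_, pB_sup_H hs⟩
  have supuniq : ∀ {x y s s'}, IsSupOf (pB qL qH him) x y s →
      IsSupOf (pB qL qH him) x y s' → s = s' :=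
    fun h h' => anti _ _ (h.2.2 _ h'.1 h'.2.1) (h'.2.2 _ h.1 h.2.1)
  refine ⟨?_, anti, ?_, supex, ?_, ?_⟩
  · intro x
    rcases trichB him x with rfl | ⟨a, rfl⟩ | ⟨a, rfl⟩
    · exact pB_xr
    · exact pB_LL.mpr (hrefl hqL a)
    · exact pB_HH.mpr (hrefl hqH a)
  · intro x y z h1 h2
    rcases trichB him z with rfl | ⟨c, rfl⟩ | ⟨c, rfl⟩
    · exact pB_xr
    · obtain ⟨b, rfl, hbc⟩ := pB_destL h2
      obtain ⟨a, rfl, hab⟩ := pB_destL h1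
      exact pB_LL.mpr (htrans hqL a b c hab hbc)
    · obtain ⟨b, rfl, hbc⟩ := pB_destH h2
      obtain ⟨a, rfl, hab⟩ := pB_destH h1
      exact pB_HH.mpr (htrans hqH a b c hab hbc)
  · intro a b c s hab hbc
    constructor
    · intro hs heq
      subst heq
      rcases trichB him s with rfl | ⟨s₀, rfl⟩ | ⟨s₀, rfl⟩
      · -- s = rI, b and c are above rI in natural order, so in H
        obtain ⟨b₀, rfl⟩ := eH_surj hab
        obtain ⟨c₀, rfl⟩ := eH_surj (lt_trans hab hbc)
        obtain ⟨w, hw⟩ := hsup hqH b₀ c₀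
        exact eH_ne_r (supuniq (pB_sup_H hw) hs)
      · obtain ⟨b₀, rfl, -⟩ := pB_destL hs.1
        obtain ⟨c₀, rfl, -⟩ := pB_destL hs.2.1
        have hlow := pB_lowL hs
        have h1 : s₀ < b₀ := eL_strictMono.lt_iff_lt.mp hab
        have h2 : b₀ < c₀ := eL_strictMono.lt_iff_lt.mp hbc
        exact (hint hqL s₀ b₀ c₀ s₀ h1 h2).1 hlow rfl
      · obtain ⟨b₀, rfl, -⟩ := pB_destH hs.1
        obtain ⟨c₀, rfl, -⟩ := pB_destH hs.2.1
        have hlow := pB_lowH hs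
        have h1 : s₀ < b₀ := eH_strictMono.lt_iff_lt.mp hab
        have h2 : b₀ < c₀ := eH_strictMono.lt_iff_lt.mp hbc
        exact (hint hqH s₀ b₀ c₀ s₀ h1 h2).1 hlow rfl
    · intro hs heq
      subst heq
      rcases trichB him s with rfl | ⟨s₀, rfl⟩ | ⟨s₀, rfl⟩
      · obtain ⟨a₀, rfl⟩ := eL_surj (him := him) (lt_trans hab hbc)
        obtain ⟨b₀, rfl⟩ := eL_surj (him := him) hbc
        obtain ⟨w, hw⟩ := hsup hqL a₀ b₀
        exact eL_ne_r (supuniq (pB_sup_L hw) hs)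
      · obtain ⟨b₀, rfl, -⟩ := pB_destL hs.2.1
        obtain ⟨a₀, rfl, -⟩ := pB_destL hs.1
        have hlow := pB_lowL hs
        have h1 : a₀ < b₀ := eL_strictMono.lt_iff_lt.mp hab
        have h2 : b₀ < s₀ := eL_strictMono.lt_iff_lt.mp hbc
        exact (hint hqL a₀ b₀ s₀ s₀ h1 h2).2 hlow rfl
      · obtain ⟨b₀, rfl, -⟩ := pB_destH hs.2.1
        obtain ⟨a₀, rfl, -⟩ := pB_destH hs.1
        have hlow := pB_lowH hs
        have h1 : a₀ < b₀ := eH_strictMono.lt_iff_lt.mp hab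
        have h2 : b₀ < s₀ := eH_strictMono.lt_iff_lt.mp hbc
        exact (hint hqH a₀ b₀ s₀ s₀ h1 h2).2 hlow rfl
  · rintro ⟨x, y, z, h1, h2, h3, h4⟩
    have hx : x ≠ rI m i him := fun h => h2 (h ▸ pB_xr)
    have hy : y ≠ rI m i him := fun h => h1 (h ▸ pB_xr)
    rcases trichB him z with rfl | ⟨c, rfl⟩ | ⟨c, rfl⟩
    · exact hx (pB_of_r h3)
    · rcases pB_fromL h3 with h | ⟨x₀, rfl, hzx⟩
      · exact hx h
      rcases pB_fromL h4 with h | ⟨y₀, rfl, hzy⟩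
      · exact hy h
      refine hqL.2.2.2.2.2 ⟨x₀, y₀, c, ?_, ?_, hzx, hzy⟩
      · exact fun h => h1 (pB_LL.mpr h)
      · exact fun h => h2 (pB_LL.mpr h)
    · rcases pB_fromH h3 with h | ⟨x₀, rfl, hzx⟩
      · exact hx h
      rcases pB_fromH h4 with h | ⟨y₀, rfl, hzy⟩
      · exact hy h
      refine hqH.2.2.2.2.2 ⟨x₀, y₀, c, ?_, ?_, hzx, hzy⟩
      · exact fun h => h1 (pB_HH.mpr h)
      · exact fun h => h2 (pB_HH.mpr h)

end CaseB

section Decomp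

variable {n : ℕ} {p : Fin n → Fin n → Prop}

/-- a sup of the form `IsSupOf p x y y` when `p x y`. -/
lemma sup_of_le (hp : IsInternalLFSemilatticeOrder n p) {x y : Fin n} (h : p x y) :
    IsSupOf p x y y := ⟨h, hrefl hp y, fun _ _ h2 => h2⟩

/-- both elements of a pair whose sup is the top, with both distinct from the top,
sit strictly on either side of the top. -/
lemma split_pos (hp : IsInternalLFSemilatticeOrder n p) {r x y : Fin n}
    (hx : x ≠ r) (hy : y ≠ r) (hs : IsSupOf p x y r) :
    (x.val < r.val ∧ r.val < y.val) ∨ (y.val < r.val ∧ r.val < x.val) := by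
  have hne : x ≠ y := by
    rintro rfl
    exact hx (sup_self hp hs).symm
  have hb := sup_between' hp hs
  have hxv : x.val ≠ r.val := fun h => hx (Fin.ext h)
  have hyv : y.val ≠ r.val := fun h => hy (Fin.ext h)
  have hnev : x.val ≠ y.val := fun h => hne (Fin.ext h)
  omega

/-- sup of two elements below the top (in position) stays below. -/
lemma L_closed (hp : IsInternalLFSemilatticeOrder n p) {r u w s : Fin n}
    (hu : u.val < r.val) (hw : w.val < r.val) (hs : IsSupOf p u w s) :
    s.val < r.val := by
  have := sup_between' hp hs
  omega

lemma H_closed (hp : IsInternalLFSemilatticeOrder n p) {r u w s : Fin n}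
    (hu : r.val < u.val) (hw : r.val < w.val) (hs : IsSupOf p u w s) :
    r.val < s.val := by
  have := sup_between' hp hs
  omega

/-- if one mixed pair has the top as its sup, all mixed pairs do. -/
lemma cross_sup (hp : IsInternalLFSemilatticeOrder n p) {r x y : Fin n}
    (hr : ∀ w, p w r)
    (hx : x.val < r.val) (hy : r.val < y.val) (hxy : IsSupOf p x y r)
    {u v : Fin n} (hu : u.val < r.val) (hv : r.val < v.val) :
    IsSupOf p u v r := by
  obtain ⟨s, hs⟩ := hsup hp u v
  rcases eq_or_ne s r with rfl | hsr
  · exact hs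
  exfalso
  -- w := sup of u and x, stays low
  obtain ⟨w, hw⟩ := hsup hp u x
  have hwv : w.val < r.val := L_closed hp hu hx hw
  -- w' := sup of v and y, stays high
  obtain ⟨w', hw'⟩ := hsup hp v y
  have hw'v : r.val < w'.val := H_closed hp hv hy hw'
  -- t₁ : a common upper bound of x and v different from r
  obtain ⟨t₁, hxt, hvt, ht1⟩ : ∃ t₁, p x t₁ ∧ p v t₁ ∧ t₁ ≠ r := by
    rcases hLF hp w s u hw.1 hs.1 with h | h
    · exact ⟨s, htrans hp x w s hw.2.1 h, hs.2.1, hsr⟩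
    · refine ⟨w, hw.2.1, htrans hp v s w hs.2.1 h, ?_⟩
      exact fun h' => absurd (congrArg Fin.val h') (by omega)
  -- compare t₁ with w'
  rcases hLF hp t₁ w' v hvt hw'.1 with h | h
  · -- x and y both below w', so r ≤ w', so w' = r
    have h1 : p x w' := htrans hp x t₁ w' hxt h
    have h2 : p r w' := hxy.2.2 w' h1 hw'.2.1
    have : w' = r := hanti hp w' r (hr w') h2
    exact absurd (congrArg Fin.val this) (by omega)
  · -- x and y both below t₁, so r ≤ t₁, so t₁ = r
    have h1 : p y t₁ := htrans hp y w' t₁ hw'.2.1 h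
    have h2 : p r t₁ := hxy.2.2 t₁ hxt h1
    exact ht1 (hanti hp t₁ r (hr t₁) h2)

end Decomp

section Bij

def T (m : ℕ) : Type :=
  ((i : {j // j ∈ Finset.Icc 1 m}) × (S i.1 × S (m + 1 - i.1))) ⊕ (Fin (m + 2) × S (m + 1))

def dec (m : ℕ) : T m → S (m + 2)
  | Sum.inl ⟨⟨i, hi⟩, qL, qH⟩ =>
      ⟨pB qL.1 qH.1 (Finset.mem_Icc.mp hi).2, pB_valid qL.2 qH.2⟩
  | Sum.inr (r, q) => ⟨pA r q.1, pA_valid q.2⟩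

lemma pA_ne_pB {m i : ℕ} {him : i ≤ m} {hi1 : 1 ≤ i}
    {r : Fin (m + 2)} {q : Fin (m + 1) → Fin (m + 1) → Prop}
    (hq : IsInternalLFSemilatticeOrder (m + 1) q)
    {qL : Fin i → Fin i → Prop} {qH : Fin (m + 1 - i) → Fin (m + 1 - i) → Prop}
    (hrel : pA r q = pB qL qH him) : False := by
  -- the tops agree
  have h1 : pA r q (rI m i him) r := pA_top _
  have h2 : pA r q r (rI m i him) := by rw [hrel]; exact pB_xr
  have hre : r = rI m i him := hanti (pA_valid hq) _ _ h2 h1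
  -- the cross sup in pB is the top, but sups in pA avoid the top
  have ha0 : (0 : ℕ) < i := hi1
  have hb0 : (0 : ℕ) < m + 1 - i := by omega
  have hcross : IsSupOf (pB qL qH him) (eL m i him ⟨0, ha0⟩) (eH m i ⟨0, hb0⟩)
      (rI m i him) := pB_sup_cross
  rw [← hrel, ← hre] at hcross
  have hL : eL m i him ⟨0, ha0⟩ ≠ r := by rw [hre]; exact eL_ne_r
  have hH : eH m i ⟨0, hb0⟩ ≠ r := by rw [hre]; exact eH_ne_r
  obtain ⟨a, ha⟩ := Fin.exists_succAbove_eq hL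
  obtain ⟨b, hb⟩ := Fin.exists_succAbove_eq hH
  obtain ⟨s0, hs0⟩ := hsup hq a b
  have hemb := pA_sup_emb (r := r) hq hs0
  rw [ha, hb] at hemb
  exact Fin.succAbove_ne r s0 (sup_unique (pA_valid hq) hemb hcross)

lemma dec_inj (m : ℕ) : Function.Injective (dec m) := by
  rintro (⟨⟨i1, hi1⟩, qL1, qH1⟩ | ⟨r1, q1⟩) (⟨⟨i2, hi2⟩, qL2, qH2⟩ | ⟨r2, q2⟩) h <;>
    have hrel := congrArg Subtype.val h
  · -- inl / inl
    simp only [dec] at hrel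
    have him1 := (Finset.mem_Icc.mp hi1).2
    have him2 := (Finset.mem_Icc.mp hi2).2
    have hanti1 := hanti (pB_valid (him := him1) qL1.2 qH1.2)
    have h2 : pB qL1.1 qH1.1 him1 (rI m i1 him1) (rI m i2 him2) := by
      rw [hrel]; exact pB_xr
    have h3 : pB qL1.1 qH1.1 him1 (rI m i2 him2) (rI m i1 him1) := pB_xr
    have hii : i1 = i2 := congrArg Fin.val (hanti1 _ _ h2 h3)
    subst hii
    have hqL : qL1 = qL2 := by
      refine Subtype.ext (funext fun a => funext fun b => propext ⟨?_, ?_⟩)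
      · intro hab
        exact pB_LL.mp (by rw [← hrel]; exact pB_LL.mpr hab)
      · intro hab
        exact pB_LL.mp (by rw [hrel]; exact pB_LL.mpr hab)
    have hqH : qH1 = qH2 := by
      refine Subtype.ext (funext fun a => funext fun b => propext ⟨?_, ?_⟩)
      · intro hab
        exact pB_HH.mp (by rw [← hrel]; exact pB_HH.mpr hab)
      · intro hab
        exact pB_HH.mp (by rw [hrel]; exact pB_HH.mpr hab)
    subst hqL
    subst hqH
    rfl
  · -- inl / inr
    simp only [dec] at hrel
    exact absurd (pA_ne_pB (hi1 := (Finset.mem_Icc.mp hi1).1) q2.2 hrel.symm) not_false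
  · -- inr / inl
    simp only [dec] at hrel
    exact absurd (pA_ne_pB (hi1 := (Finset.mem_Icc.mp hi2).1) q1.2 hrel) not_false
  · -- inr / inr
    simp only [dec] at hrel
    have h1 : pA r1 q1.1 r2 r1 := pA_top _
    have h2 : pA r1 q1.1 r1 r2 := by rw [hrel]; exact pA_top _
    have hrr : r1 = r2 := hanti (pA_valid q1.2) _ _ h2 h1
    subst hrr
    have hq : q1 = q2 := by
      refine Subtype.ext (funext fun a => funext fun b => propext ⟨?_, ?_⟩)
      · intro hab
        exact pA_emb.mp (by rw [← hrel]; exact pA_emb.mpr hab)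
      · intro hab
        exact pA_emb.mp (by rw [hrel]; exact pA_emb.mpr hab)
    subst hq
    rfl

lemma dec_surj (m : ℕ) : Function.Surjective (dec m) := by
  rintro ⟨p, hp⟩
  obtain ⟨r, hr⟩ := exists_top hp (by omega)
  by_cases hsplit : ∃ x y, x ≠ r ∧ y ≠ r ∧ IsSupOf p x y r
  · -- split case
    obtain ⟨x, y, hx, hy, hxyr⟩ := hsplit
    obtain ⟨u, v, hu, hv, huv⟩ :
        ∃ u v, u.val < r.val ∧ r.val < v.val ∧ IsSupOf p u v r := by
      rcases split_pos hp hx hy hxyr with ⟨h1, h2⟩ | ⟨h1, h2⟩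
      · exact ⟨x, y, h1, h2, hxyr⟩
      · exact ⟨y, x, h1, h2, sup_comm hxyr⟩
    set i := r.val with hidef
    have him : i ≤ m := by have := v.isLt; omega
    have hi1 : 1 ≤ i := by omega
    have eLval : ∀ a : Fin i, (eL m i him a).val < r.val := fun a => a.isLt
    have eHval : ∀ b : Fin (m + 1 - i), r.val < (eH m i b).val := fun b => by
      show i < i + 1 + b.val
      omega
    have hqL := restrict_valid hp (eL m i him) eL_strictMono (by
      intro a b s hs
      exact eL_surj (L_closed hp (eLval a) (eLval b) hs))
    have hqH := restrict_valid hp (eH m i) eH_strictMono (by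
      intro a b s hs
      exact eH_surj (H_closed hp (eHval a) (eHval b) hs))
    refine ⟨Sum.inl ⟨⟨i, Finset.mem_Icc.mpr ⟨hi1, him⟩⟩, ⟨_, hqL⟩, ⟨_, hqH⟩⟩, ?_⟩
    refine Subtype.ext (funext fun x' => funext fun y' => propext ⟨?_, ?_⟩)
    · rintro (rfl | ⟨a, b, rfl, rfl, hab⟩ | ⟨a, b, rfl, rfl, hab⟩)
      · exact hr x'
      · exact hab
      · exact hab
    · intro hxy
      rcases trichB him y' with rfl | ⟨b, rfl⟩ | ⟨b, rfl⟩
      · exact Or.inl rfl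
      · rcases trichB him x' with rfl | ⟨a, rfl⟩ | ⟨a, rfl⟩
        · exact absurd (hanti hp _ _ hxy (hr _)).symm eL_ne_r
        · exact Or.inr (Or.inl ⟨a, b, rfl, rfl, hxy⟩)
        · exfalso
          have hcs := cross_sup hp hr hu hv huv (eLval b) (eHval a)
          have heq := sup_unique hp (sup_of_le hp hxy) (sup_comm hcs)
          have := congrArg Fin.val heq
          have := eLval b
          omega
      · rcases trichB him x' with rfl | ⟨a, rfl⟩ | ⟨a, rfl⟩
        · exact absurd (hanti hp _ _ hxy (hr _)).symm eH_ne_r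
        · exfalso
          have hcs := cross_sup hp hr hu hv huv (eLval a) (eHval b)
          have heq := sup_unique hp (sup_of_le hp hxy) hcs
          have := congrArg Fin.val heq
          have := eHval b
          omega
        · exact Or.inr (Or.inr ⟨a, b, rfl, rfl, hxy⟩)
  · -- non-split case
    have hcl : ∀ a b s, IsSupOf p (r.succAbove a) (r.succAbove b) s →
        ∃ c, r.succAbove c = s := by
      intro a b s hs
      rcases eq_or_ne s r with rfl | hsr
      · exact absurd ⟨_, _, Fin.succAbove_ne s a, Fin.succAbove_ne s b, hs⟩ hsplit
      · exact Fin.exists_succAbove_eq hsr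
    have hq := restrict_valid hp _ (Fin.strictMono_succAbove r) hcl
    refine ⟨Sum.inr (r, ⟨_, hq⟩), ?_⟩
    refine Subtype.ext (funext fun x => funext fun y => propext ⟨?_, ?_⟩)
    · rintro (rfl | ⟨a, b, rfl, rfl, hab⟩)
      · exact hr x
      · exact hab
    · intro hxy
      rcases eq_or_ne y r with rfl | hy
      · exact Or.inl rfl
      rcases eq_or_ne x r with rfl | hx
      · exact absurd (hanti hp _ _ hxy (hr y)).symm hy
      obtain ⟨a, ha⟩ := Fin.exists_succAbove_eq hx
      obtain ⟨b, hb⟩ := Fin.exists_succAbove_eq hy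
      refine Or.inr ⟨a, b, ha.symm, hb.symm, ?_⟩
      show p (r.succAbove a) (r.succAbove b)
      rw [ha, hb]
      exact hxy

end Bij

section Card

lemma nat_card_sigma {ι : Type*} [Fintype ι] (f : ι → Type*) [∀ i, Finite (f i)] :
    Nat.card ((i : ι) × f i) = ∑ i, Nat.card (f i) := by
  letI := fun i => Fintype.ofFinite (f i)
  rw [Nat.card_eq_fintype_card, Fintype.card_sigma]
  exact Finset.sum_congr rfl fun i _ => (Nat.card_eq_fintype_card).symm

lemma card_T (m : ℕ) :
    Nat.card (T m) = (∑ i ∈ Finset.Icc 1 m, β i * β (m + 1 - i)) + (m + 2) * β (m + 1) := by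
  rw [show Nat.card (T m) =
      Nat.card ((i : {j // j ∈ Finset.Icc 1 m}) × (S i.1 × S (m + 1 - i.1))) +
        Nat.card (Fin (m + 2) × S (m + 1)) from Nat.card_sum]
  congr 1
  · rw [nat_card_sigma]
    have h1 : ∀ i : {j // j ∈ Finset.Icc 1 m},
        Nat.card (S i.1 × S (m + 1 - i.1)) = β i.1 * β (m + 1 - i.1) := by
      intro i
      rw [Nat.card_prod]
      rfl
    refine Eq.trans (Finset.sum_congr rfl fun i _ => h1 i) ?_
    exact Finset.sum_coe_sort _ (fun j => β j * β (m + 1 - j))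
  · rw [Nat.card_prod, Nat.card_eq_fintype_card (α := Fin (m + 2)), Fintype.card_fin]
    rfl

lemma beta0 : β 0 = 1 := by
  haveI : Nonempty (S 0) :=
    ⟨⟨fun _ _ => True, fun x => x.elim0, fun x => x.elim0, fun x => x.elim0,
      fun x => x.elim0, fun a => a.elim0, fun h => h.choose.elim0⟩⟩
  haveI : Subsingleton (S 0) :=
    ⟨fun a b => Subtype.ext (funext fun x => x.elim0)⟩
  exact Nat.card_unique

lemma beta1 : β 1 = 1 := by
  haveI : Nonempty (S 1) := by
    refine ⟨⟨fun _ _ => True, fun _ => trivial, fun x y _ _ => Subsingleton.elim x y,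
      fun _ _ _ _ _ => trivial, fun x y => ⟨x, trivial, trivial, fun _ _ _ => trivial⟩,
      ?_, ?_⟩⟩
    · intro a b c s hab hbc
      have h1 := a.isLt
      have h2 := b.isLt
      have h3 := Fin.lt_def.mp hab
      omega
    · rintro ⟨x, y, z, h1, -⟩
      exact h1 trivial
  haveI : Subsingleton (S 1) := by
    refine ⟨fun a b => Subtype.ext (funext fun x => funext fun y => propext ⟨?_, ?_⟩)⟩
    · intro _
      rw [show x = y from Subsingleton.elim x y]
      exact hrefl b.2 y
    · intro _
      rw [show x = y from Subsingleton.elim x y]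
      exact hrefl a.2 y
  exact Nat.card_unique

end Card

end Stmt18

/-- Recurrence for the number of semilattice orders on the n-element chain that
are internal and have the linear filter property. -/
theorem stmt_18 :
    β 0 = 1 ∧ β 1 = 1 ∧
    ∀ n : ℕ, 2 ≤ n →
      β n = (∑ i ∈ Finset.Icc 1 (n - 2), β i * β (n - i - 1)) + n * β (n - 1) := by
  refine ⟨Stmt18.beta0, Stmt18.beta1, ?_⟩
  intro n hn
  obtain ⟨m, rfl⟩ : ∃ m, n = m + 2 := ⟨n - 2, by omega⟩
  have hbij : Function.Bijective (Stmt18.dec m) := ⟨Stmt18.dec_inj m, Stmt18.dec_surj m⟩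
  have hcard : Nat.card (Stmt18.T m) = β (m + 2) := Nat.card_eq_of_bijective _ hbij
  rw [← hcard, Stmt18.card_T]
  have h2 : m + 2 - 2 = m := by omega
  rw [h2]
  congr 1
  · apply Finset.sum_congr rfl
    intro i hi
    have hmem := Finset.mem_Icc.mp hi
    rw [show m + 2 - i - 1 = m + 1 - i by omega]
end

section
/- Let F : Xₙ² → Xₙ be an ≤ₙ-preserving semilattice operation whose associated order ⪯ satisfies: there exists a ∈ Xₙ with 1 ≺ 2 ≺ ... ≺ a−1 ≺ a, n ≺ n−1 ≺ ... ≺ a+1 ≺ a, and 1, n incomparable (when a ∉ {1,n}). Then F is smooth, i.e., F(x,y) ≤ F(x+1,y) ≤ F(x,y)+1 for x < n and F(x,y) ≤ F(x,y+1) ≤ F(x,y)+1 for y < n; and conversely every smooth semilattice operation on Xₙ has an associated order of this form. -/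
/-- A semilattice operation on the n-element chain that is order-preserving is
smooth iff its associated order consists of two chains 1 ≺ 2 ≺ ⋯ ≺ a and
n ≺ n-1 ≺ ⋯ ≺ a meeting at a top element a (i.e. x ⪯ y iff
(x ≤ y ∧ y ≤ a) ∨ (y ≤ x ∧ a ≤ y)). -/
theorem stmt_19 (n : ℕ) (hn : 0 < n) (F : Fin n → Fin n → Fin n)
    (hassoc : ∀ x y z, F x (F y z) = F (F x y) z)
    (hcomm : ∀ x y, F x y = F y x)
    (hidem : ∀ x, F x x = x)
    (hmono : ∀ x y z t : Fin n, x ≤ z → y ≤ t → F x y ≤ F z t) :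
    ((∀ (x y : Fin n) (h : x.val + 1 < n),
        F x y ≤ F ⟨x.val + 1, h⟩ y ∧ (F ⟨x.val + 1, h⟩ y).val ≤ (F x y).val + 1) ∧
     (∀ (x y : Fin n) (h : y.val + 1 < n),
        F x y ≤ F x ⟨y.val + 1, h⟩ ∧ (F x ⟨y.val + 1, h⟩).val ≤ (F x y).val + 1)) ↔
    (∃ a : Fin n, ∀ x y : Fin n,
      (F x y = y ↔ ((x ≤ y ∧ y ≤ a) ∨ (y ≤ x ∧ a ≤ y)))) := by
  constructor
  · rintro ⟨hs1, hs2⟩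
    have hs2' : ∀ (x y z : Fin n), z.val = y.val + 1 → (F x z).val ≤ (F x y).val + 1 := by
      intro x y z h
      have hlt : y.val + 1 < n := h ▸ z.isLt
      have hz : z = ⟨y.val + 1, hlt⟩ := Fin.ext h
      rw [hz]
      exact (hs2 x y hlt).2
    have key : ∀ (k : ℕ) (x y z : Fin n), z.val = y.val + k →
        (F x z).val ≤ (F x y).val + k := by
      intro k
      induction k with
      | zero =>
        intro x y z h
        have hz : z = y := Fin.ext (by omega)
        rw [hz]; omega
      | succ k ih =>
        intro x y z h
        have hw : y.val + k < n := by have := z.isLt; omega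
        have h1 := ih x y ⟨y.val + k, hw⟩ rfl
        have h2 := hs2' x ⟨y.val + k, hw⟩ z (by simp; omega)
        omega
    have hm : n - 1 < n := by omega
    obtain ⟨a, ha⟩ : ∃ a, a = F ⟨0, hn⟩ ⟨n - 1, hm⟩ := ⟨_, rfl⟩
    have h0a : F ⟨0, hn⟩ a = a := by rw [ha, hassoc, hidem]
    have hma : F ⟨n - 1, hm⟩ a = a := by
      rw [ha, hcomm ⟨0, hn⟩ ⟨n - 1, hm⟩, hassoc, hidem]
    have htop : ∀ x : Fin n, F x a = a := by
      intro x
      have h1 : F ⟨0, hn⟩ a ≤ F x a :=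
        hmono _ _ _ _ (by rw [Fin.le_def]; simp) le_rfl
      have h2 : F x a ≤ F ⟨n - 1, hm⟩ a :=
        hmono _ _ _ _ (by rw [Fin.le_def]; simp; have := x.isLt; omega) le_rfl
      rw [h0a] at h1
      rw [hma] at h2
      exact le_antisymm h2 h1
    have hchain1 : ∀ x y : Fin n, x ≤ y → y ≤ a → F x y = y := by
      intro x y hxy hya
      have hub : (F x a).val ≤ (F x y).val + (a.val - y.val) :=
        key (a.val - y.val) x y a (by rw [Fin.le_def] at hya; omega)
      rw [htop x] at hub
      have hle : F x y ≤ F y y := hmono _ _ _ _ hxy le_rfl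
      rw [hidem] at hle
      rw [Fin.le_def] at hya hxy hle
      exact Fin.ext (by omega)
    have hchain2 : ∀ x y : Fin n, a ≤ y → y ≤ x → F x y = y := by
      intro x y hay hyx
      have hub : (F x y).val ≤ (F x a).val + (y.val - a.val) :=
        key (y.val - a.val) x a y (by rw [Fin.le_def] at hay; omega)
      rw [htop x] at hub
      have hge : F y y ≤ F x y := hmono _ _ _ _ hyx le_rfl
      rw [hidem] at hge
      rw [Fin.le_def] at hay hyx hge
      exact Fin.ext (by omega)
    have hFay : ∀ y : Fin n, F a y = a := by
      intro y; rw [hcomm]; exact htop y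
    refine ⟨a, fun x y => ⟨?_, ?_⟩⟩
    · intro hxy
      rcases le_total y a with hya | hay
      · rcases le_total x y with h | h
        · exact Or.inl ⟨h, hya⟩
        · rcases le_total x a with hxa | hax
          · have hyx := hchain1 y x h hxa
            rw [hcomm y x, hxy] at hyx
            exact Or.inl ⟨le_of_eq hyx.symm, hya⟩
          · have h1 : F a y ≤ F x y := hmono _ _ _ _ hax le_rfl
            rw [hxy, hFay] at h1
            exact Or.inr ⟨h, h1⟩
      · rcases le_total x y with h | h
        · rcases le_total a x with hax | hxa
          · have hyx := hchain2 y x hax h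
            rw [hcomm y x, hxy] at hyx
            exact Or.inr ⟨le_of_eq hyx, hay⟩
          · have h1 : F x y ≤ F a y := hmono _ _ _ _ hxa le_rfl
            rw [hxy, hFay] at h1
            exact Or.inl ⟨h, h1⟩
        · exact Or.inr ⟨h, hay⟩
    · rintro (⟨h1, h2⟩ | ⟨h1, h2⟩)
      · exact hchain1 x y h1 h2
      · exact hchain2 x y h2 h1
  · rintro ⟨a, ha⟩
    have hc1 : ∀ x y : Fin n, x ≤ y → y ≤ a → F x y = y :=
      fun x y h1 h2 => (ha x y).2 (Or.inl ⟨h1, h2⟩)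
    have hc2 : ∀ x y : Fin n, a ≤ y → y ≤ x → F x y = y :=
      fun x y h1 h2 => (ha x y).2 (Or.inr ⟨h2, h1⟩)
    have hmix : ∀ x y : Fin n, x ≤ a → a ≤ y → F x y = a := by
      intro x y hxa hay
      have hxv : F x (F x y) = F x y := by rw [hassoc, hidem]
      have hyv : F y (F x y) = F x y := by rw [hcomm x y, hassoc, hidem]
      have d1 := (ha x (F x y)).1 hxv
      have d2 := (ha y (F x y)).1 hyv
      rcases d1 with ⟨_, hva⟩ | ⟨hvx, hav⟩
      · rcases d2 with ⟨hyv2, _⟩ | ⟨_, hav⟩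
        · exact le_antisymm hva (le_trans hay hyv2)
        · exact le_antisymm hva hav
      · exact le_antisymm (le_trans hvx hxa) hav
    have hval : ∀ x y : Fin n,
        (F x y).val = min (max x.val y.val) (max (min x.val y.val) a.val) := by
      intro x y
      rcases le_total x a with h1 | h1 <;> rcases le_total y a with h2 | h2 <;>
        rcases le_total x y with h3 | h3
      · rw [hc1 x y h3 h2]; rw [Fin.le_def] at h1 h2 h3; omega
      · rw [hcomm, hc1 y x h3 h1]; rw [Fin.le_def] at h1 h2 h3; omega
      · rw [hmix x y h1 h2]; rw [Fin.le_def] at h1 h2 h3; omega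
      · rw [hmix x y h1 h2]; rw [Fin.le_def] at h1 h2 h3; omega
      · rw [hcomm, hmix y x h2 h1]; rw [Fin.le_def] at h1 h2 h3; omega
      · rw [hcomm, hmix y x h2 h1]; rw [Fin.le_def] at h1 h2 h3; omega
      · rw [hcomm, hc2 y x h1 h3]; rw [Fin.le_def] at h1 h2 h3; omega
      · rw [hc2 x y h2 h3]; rw [Fin.le_def] at h1 h2 h3; omega
    constructor
    · intro x y h
      refine ⟨hmono _ _ _ _ (by rw [Fin.le_def]; simp) le_rfl, ?_⟩
      rw [hval, hval]
      simp only [Fin.val_mk]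
      omega
    · intro x y h
      refine ⟨hmono _ _ _ _ le_rfl (by rw [Fin.le_def]; simp), ?_⟩
      rw [hval, hval]
      simp only [Fin.val_mk]
      omega
end
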